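/- arXiv:1705.01275 — 6 statements merged into one kernel-verified Lean document; each statement's English description precedes it below -/
import Mathlib

section
/- Let G be a finite non-abelian AC-group, and let X₁, …, Xₙ be the distinct centralizers of non-central elements of G, ordered so that |X₁| ≤ |X₂| ≤ … ≤ |Xₙ|. Then the Laplacian spectrum of the non-commuting graph 𝒜_G is {0^1, (|G| − |Xₙ|)^{|Xₙ| − |Z(G)| − 1}, …, (|G| − |X₁|)^{|X₁| − |Z(G)| − 1}, (|G| − |Z(G)|)^{n − 1}}; equivalently, the characteristic polynomial of L(𝒜_G) equals X · ∏_{i=1}^{n} (X − (|G| − |Xᵢ|))^{|Xᵢ| − |Z(G)| − 1} · (X − (|G| − |Z(G)|))^{n − 1}. -/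
/-
In an AC-group two non-central elements commute exactly when they have the same centralizer,
so the non-commuting graph is the complete multipartite graph whose parts are the sets
`Xᵢ \ Z(G)`.  For a complete multipartite graph with parts of sizes `mᵢ` and `N` vertices,
`t - L` is a diagonal matrix plus the adjacency matrix of the complete graph on the parts pulled
back to the vertices; the matrix determinant lemma reduces its determinant to one over the parts,
and the rank-one determinant lemma evaluates that one.  Over the fraction field of `R[X]`, with
`t = X`, this gives `X (X - N)^(n-1) ∏ (X - (N - mᵢ))^(mᵢ - 1)`.
-/

open Polynomial

/-- The non-commuting graph of a group `G`: vertices are the non-central elements,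
two vertices adjacent iff they do not commute. -/
def nonCommGraph (G : Type*) [Group G] : SimpleGraph {x : G // x ∉ Subgroup.center G} where
  Adj x y := ¬ Commute (x : G) (y : G)
  symm := ⟨fun _ _ h hc => h hc.symm⟩
  loopless := ⟨fun _ h => h (Commute.refl _)⟩

/-- The Laplacian matrix of the non-commuting graph, over `ℝ`. -/
noncomputable def ncLap (G : Type*) [Group G] [Fintype G] :
    Matrix {x : G // x ∉ Subgroup.center G} {x : G // x ∉ Subgroup.center G} ℝ :=
  letI := Classical.decEq G
  letI : DecidablePred (fun x : G => x ∉ Subgroup.center G) := fun _ => Classical.dec _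
  letI : DecidableRel (nonCommGraph G).Adj := fun _ _ => Classical.dec _
  (nonCommGraph G).lapMatrix ℝ

/-- The characteristic polynomial of the Laplacian matrix of the non-commuting graph. -/
noncomputable def ncCharpoly (G : Type*) [Group G] [Fintype G] : Polynomial ℝ :=
  letI := Classical.decEq G
  letI : DecidablePred (fun x : G => x ∉ Subgroup.center G) := fun _ => Classical.dec _
  (ncLap G).charpoly

/-- The non-commuting graph of `G` is L-integral: every eigenvalue of its Laplacian
matrix is an integer. -/
def ncLIntegral (G : Type*) [Group G] [Fintype G] : Prop :=
  letI := Classical.decEq G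
  letI : DecidablePred (fun x : G => x ∉ Subgroup.center G) := fun _ => Classical.dec _
  ∀ μ ∈ spectrum ℝ (ncLap G), ∃ k : ℤ, μ = (k : ℝ)

open Matrix Finset

section Determinant

variable {K ι : Type*} [Field K] [Fintype ι] [DecidableEq ι]

theorem det_diagonal_comp_add_submatrix {V : Type*} [Fintype V] [DecidableEq V] (f : V → ι)
    {c : ι → K} (hc : ∀ i, c i ≠ 0) (A : Matrix ι ι K) :
    det (diagonal (c ∘ f) + A.submatrix f f) =
      (∏ i, c i ^ #{v | f v = i}) *
        det (1 + A * diagonal fun i => (#{v | f v = i} : K) / c i) := by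
  set U : Matrix V ι K := (1 : Matrix ι ι K).submatrix f id
  have hA : A.submatrix f f = U * (A * Uᵀ) := by
    ext v w
    simp [U, mul_apply, one_apply]
  have hinv : (diagonal (c ∘ f))⁻¹ = diagonal fun v => (c (f v))⁻¹ :=
    inv_eq_left_inv <| by simp [diagonal_mul_diagonal, hc]
  have hUDU :
      Uᵀ * (diagonal (c ∘ f))⁻¹ * U = diagonal fun i => (#{v | f v = i} : K) / c i := by
    ext i j
    rw [hinv, mul_apply]
    simp only [mul_diagonal, U, transpose_apply, submatrix_apply, id, one_apply]
    rcases eq_or_ne i j with rfl | hij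
    · simp +contextual [div_eq_mul_inv, ← sum_filter]
    · simp +contextual [hij.symm, diagonal_apply_ne _ hij]
  have hunit : IsUnit (diagonal (c ∘ f)).det := by
    rw [det_diagonal]; exact (prod_ne_zero_iff.2 fun v _ => hc (f v)).isUnit
  have hdet : (diagonal (c ∘ f)).det = ∏ i, c i ^ #{v | f v = i} := by
    rw [det_diagonal, Function.comp_def, ← prod_fiberwise' univ f c]
    simp only [prod_const]
  rw [hA, det_add_mul _ _ hunit, hdet, Matrix.mul_assoc, Matrix.mul_assoc,
    ← Matrix.mul_assoc Uᵀ, hUDU]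

theorem det_one_add_adjMatrix_top_mul_diagonal {w : ι → K} (hw : ∀ i, w i ≠ 1) :
    det (1 + (⊤ : SimpleGraph ι).adjMatrix K * diagonal w) =
      (∏ i, (1 - w i)) * (1 + ∑ i, w i / (1 - w i)) := by
  have hw' : ∀ i, 1 - w i ≠ 0 := fun i => sub_ne_zero.2 (hw i).symm
  have hsplit : 1 + (⊤ : SimpleGraph ι).adjMatrix K * diagonal w =
      diagonal (fun i => 1 - w i) +
        replicateCol Unit (fun _ : ι => (1 : K)) * replicateRow Unit w := by
    ext i j
    simp only [Matrix.add_apply, one_apply, diagonal_apply, mul_apply, replicateCol_apply,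
      replicateRow_apply, univ_unique, sum_singleton, SimpleGraph.adjMatrix_apply,
      SimpleGraph.top_adj]
    split_ifs <;> simp_all
  have hunit : IsUnit (diagonal fun i => 1 - w i).det := by
    rw [det_diagonal]; exact (prod_ne_zero_iff.2 fun i _ => hw' i).isUnit
  have hinv : (diagonal fun i => 1 - w i)⁻¹ = diagonal fun i => (1 - w i)⁻¹ :=
    inv_eq_left_inv <| by simp [diagonal_mul_diagonal, hw']
  rw [hsplit, det_add_replicateCol_mul_replicateRow hunit, det_diagonal, det_unique, hinv]
  simp [mul_apply, diagonal_apply, div_eq_mul_inv]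

end Determinant

namespace SimpleGraph

variable {ι V : Type*} [Fintype V] [DecidableEq ι]

theorem degree_comap_top_add_card_fiber (f : V → ι) (v : V) :
    ((⊤ : SimpleGraph ι).comap f).degree v + #{w | f w = f v} = Fintype.card V := by
  have := card_filter_add_card_filter_not (s := univ) (fun w => f v ≠ f w)
  simpa [← card_neighborFinset_eq_degree, neighborFinset_eq_filter, eq_comm] using this

variable [Fintype ι] [DecidableEq V] [Nonempty ι]

theorem det_smul_one_sub_lapMatrix_comap_top {K : Type*} [Field K] {f : V → ι}
    (hf : Function.Surjective f) {t : K} (hN : t ≠ Fintype.card V)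
    (hm : ∀ i, t ≠ Fintype.card V - #{v | f v = i}) :
    det (t • 1 - ((⊤ : SimpleGraph ι).comap f).lapMatrix K) =
      t * (∏ i, (t - (Fintype.card V - #{v | f v = i})) ^ (#{v | f v = i} - 1)) *
        (t - Fintype.card V) ^ (Fintype.card ι - 1) := by
  set N : K := ((Fintype.card V : ℕ) : K)
  set m : ι → ℕ := fun i => #{v | f v = i}
  have hmi : ∀ i, #{v | f v = i} = m i := fun _ => rfl
  simp only [hmi] at hm ⊢
  obtain ⟨u, rfl⟩ : ∃ u, t = u + N := ⟨t - N, by ring⟩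
  set c : ι → K := fun i => u + m i
  have hu : u ≠ 0 := fun h => hN (by simp [h])
  have hc : ∀ i, c i ≠ 0 := fun i h => hm i (by linear_combination h)
  have hsplit : (u + N) • 1 - ((⊤ : SimpleGraph ι).comap f).lapMatrix K =
      diagonal (c ∘ f) + ((⊤ : SimpleGraph ι).adjMatrix K).submatrix f f := by
    ext v w
    rcases eq_or_ne v w with rfl | hvw
    · have hdeg : u + N - (((⊤ : SimpleGraph ι).comap f).degree v : K) = c (f v) := by
        simp only [N, c, m, ← degree_comap_top_add_card_fiber f v]; push_cast; ring
      simp [lapMatrix, degMatrix, hdeg]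
    · simp [lapMatrix, degMatrix, hvw]
  have hsum : ∑ i, (m i : K) = N := by
    rw [← Nat.cast_sum, ← card_eq_sum_card_fiberwise (fun v _ => mem_univ (f v)), card_univ]
  have hone_sub : ∀ i, 1 - (m i : K) / c i = u / c i := fun i => by
    field_simp [hc i]; ring
  have hratio : ∀ i, (m i : K) / c i / (u / c i) = m i / u := fun i => by
    field_simp [hc i, hu]
  have hne_one : ∀ i, (m i : K) / c i ≠ 1 := fun i h => by
    simpa [h, hu, hc i] using (hone_sub i).symm
  have hpow : ∀ i, c i ^ m i = c i ^ (m i - 1) * c i := fun i => by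
    obtain ⟨v, hv⟩ := hf i
    rw [← pow_succ, Nat.sub_add_cancel (card_pos.2 ⟨v, mem_filter.2 ⟨mem_univ _, hv⟩⟩)]
  have hprod : ∏ i, c i ≠ 0 := prod_ne_zero_iff.2 fun i _ => hc i
  obtain ⟨k, hk⟩ := Nat.exists_eq_add_one_of_ne_zero (Fintype.card_pos (α := ι)).ne'
  have hc_eq : ∀ i, u + N - (N - m i) = c i := fun i => by ring
  rw [hsplit, det_diagonal_comp_add_submatrix f hc,
    det_one_add_adjMatrix_top_mul_diagonal hne_one]
  simp only [hmi, hone_sub, hratio, hc_eq, hpow, prod_mul_distrib, prod_div_distrib, prod_const,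
    card_univ, ← sum_div, hsum, hk, add_sub_cancel_right, Nat.add_sub_cancel, pow_succ]
  field_simp

theorem charpoly_lapMatrix_comap_top {R : Type*} [CommRing R] [IsDomain R]
    {f : V → ι} (hf : Function.Surjective f) :
    (((⊤ : SimpleGraph ι).comap f).lapMatrix R).charpoly =
      X * (∏ i, (X - C ((Fintype.card V : R) - #{v | f v = i})) ^ (#{v | f v = i} - 1)) *
        (X - C (Fintype.card V : R)) ^ (Fintype.card ι - 1) := by
  set φ := algebraMap R[X] (FractionRing R[X])
  have hφ : Function.Injective φ := IsFractionRing.injective R[X] (FractionRing R[X])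
  have hX : ∀ a : R, φ X ≠ φ (C a) := fun a h => X_ne_C a (hφ h)
  have hmat : (charmatrix (((⊤ : SimpleGraph ι).comap f).lapMatrix R)).map φ =
      φ X • 1 - ((⊤ : SimpleGraph ι).comap f).lapMatrix (FractionRing R[X]) := by
    ext v w
    by_cases hvw : v = w <;> simp [lapMatrix, degMatrix, hvw]
  apply hφ
  rw [Matrix.charpoly, RingHom.map_det, RingHom.mapMatrix_apply, hmat,
    det_smul_one_sub_lapMatrix_comap_top hf]
  · simp
  · simpa using hX (Fintype.card V)
  · intro i
    simpa using hX (Fintype.card V - #{v | f v = i})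

end SimpleGraph

theorem Subgroup.card_filter_mem_add_card_of_le {G : Type*} [Group G] [Fintype G]
    {H K : Subgroup G} (hKH : K ≤ H) [DecidablePred (· ∈ K)] [DecidablePred (· ∈ H)] :
    #{x : {x : G // x ∉ K} | (x : G) ∈ H} + Nat.card K = Nat.card H := by
  rw [← Fintype.card_subtype, Fintype.card_congr (Equiv.subtypeSubtypeEquivSubtypeInter _ _),
    Nat.card_eq_fintype_card, Nat.card_eq_fintype_card, Fintype.card_subtype,
    Fintype.card_subtype, Fintype.card_subtype,
    ← card_filter_add_card_filter_not (s := {x | x ∈ H}) (fun x => x ∉ K)]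
  simp only [filter_filter]
  congr 2
  · ext; simp [and_comm]
  · ext x; simpa using fun h => hKH h

def IsACGroup (G : Type*) [Group G] : Prop :=
  ∀ x : G, x ∉ Subgroup.center G →
    ∀ a ∈ Subgroup.centralizer {x}, ∀ b ∈ Subgroup.centralizer {x}, a * b = b * a

namespace IsACGroup

open Subgroup

variable {G : Type*} [Group G]

theorem centralizer_le_of_commute (hG : IsACGroup G) {x y : G} (hx : x ∉ center G)
    (hxy : Commute x y) : centralizer {x} ≤ centralizer {y} := fun a ha =>
  mem_centralizer_singleton_iff.2
    (hG x hx a ha y (mem_centralizer_singleton_iff.2 hxy.symm.eq))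

theorem centralizer_eq_iff_commute (hG : IsACGroup G) {x y : G} (hx : x ∉ center G)
    (hy : y ∉ center G) :
    centralizer {x} = centralizer {y} ↔ Commute x y := by
  refine ⟨fun h => ?_, fun h => (hG.centralizer_le_of_commute hx h).antisymm
    (hG.centralizer_le_of_commute hy h.symm)⟩
  have hy' : y ∈ centralizer {x} := h ▸ mem_centralizer_singleton_iff.2 rfl
  exact (mem_centralizer_singleton_iff.1 hy').symm

variable {ι : Type*} {S : ι → Subgroup G} {f : {x : G // x ∉ center G} → ι}

theorem nonCommGraph_eq_comap_top (hG : IsACGroup G) (hS : Function.Injective S)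
    (hf : ∀ x : {x : G // x ∉ center G}, centralizer {(x : G)} = S (f x)) :
    nonCommGraph G = (⊤ : SimpleGraph ι).comap f := by
  ext x y
  simp [nonCommGraph, ← hS.eq_iff, ← hf, hG.centralizer_eq_iff_commute x.2 y.2]

theorem apply_eq_iff_mem (hG : IsACGroup G) (hS : Function.Injective S)
    (hf : ∀ x : {x : G // x ∉ center G}, centralizer {(x : G)} = S (f x))
    {i : ι} {y : G} (hy : y ∉ center G) (hSi : S i = centralizer {y}) (x) :
    f x = i ↔ (x : G) ∈ S i := by
  rw [← hS.eq_iff, ← hf x, hSi, hG.centralizer_eq_iff_commute x.2 hy,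
    mem_centralizer_singleton_iff, commute_iff_eq]

end IsACGroup

theorem laplacian_spectrum_nc_graph_AC_group_general
    (G : Type*) [Group G] [Fintype G]
    (hna : ¬ ∀ a b : G, a * b = b * a)
    (hAC : ∀ x : G, x ∉ Subgroup.center G →
      ∀ a ∈ Subgroup.centralizer {x}, ∀ b ∈ Subgroup.centralizer {x}, a * b = b * a)
    (n : ℕ) (S : Fin n → Subgroup G)
    (hinj : Function.Injective S)
    (hcent : ∀ i, ∃ x : G, x ∉ Subgroup.center G ∧ S i = Subgroup.centralizer {x})
    (hall : ∀ x : G, x ∉ Subgroup.center G → ∃ i, Subgroup.centralizer {x} = S i) :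
    ncCharpoly G =
      X *
      (∏ i : Fin n,
        (X - C ((Fintype.card G : ℝ) - (Nat.card (S i) : ℝ))) ^
          (Nat.card (S i) - Nat.card (Subgroup.center G) - 1)) *
      (X - C ((Fintype.card G : ℝ) - (Nat.card (Subgroup.center G) : ℝ))) ^ (n - 1) := by
  classical
  choose f hf using fun x : {x : G // x ∉ Subgroup.center G} => hall x x.2
  have hfS : ∀ i x, f x = i ↔ (x : G) ∈ S i := fun i => by
    obtain ⟨y, hy, hSi⟩ := hcent i
    exact IsACGroup.apply_eq_iff_mem hAC hinj hf hy hSi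
  have hsurj : Function.Surjective f := fun i => by
    obtain ⟨y, hy, hSi⟩ := hcent i
    exact ⟨⟨y, hy⟩, (hfS _ _).2 (hSi ▸ Subgroup.mem_centralizer_singleton_iff.2 rfl)⟩
  have hfib : ∀ i, #{x | f x = i} + Nat.card (Subgroup.center G) = Nat.card (S i) := fun i => by
    obtain ⟨y, -, hSi⟩ := hcent i
    simp only [hfS]
    exact Subgroup.card_filter_mem_add_card_of_le (hSi ▸ Subgroup.center_le_centralizer _)
  have hV : Fintype.card {x : G // x ∉ Subgroup.center G} + Nat.card (Subgroup.center G) =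
      Fintype.card G := by
    rw [Fintype.card_subtype_compl, Nat.card_eq_fintype_card]
    exact Nat.sub_add_cancel (Fintype.card_subtype_le _)
  obtain ⟨g, hg⟩ : ∃ g : G, g ∉ Subgroup.center G := by
    by_contra! h
    exact hna fun a b => Subgroup.mem_center_iff.1 (h b) a
  have : Nonempty (Fin n) := ⟨f ⟨g, hg⟩⟩
  have hcp : ncCharpoly G = (((⊤ : SimpleGraph (Fin n)).comap f).lapMatrix ℝ).charpoly := by
    rw [ncCharpoly, ncLap, IsACGroup.nonCommGraph_eq_comap_top hAC hinj hf]
    -- the two sides differ only in their decidability instances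
    convert rfl
  rw [hcp, SimpleGraph.charpoly_lapMatrix_comap_top hsurj, Fintype.card_fin, ← hV]
  simp only [← hfib, Nat.cast_add, add_sub_add_right_eq_sub, add_sub_cancel_right,
    Nat.add_sub_cancel]

/-- Laplacian spectrum of the non-commuting graph of a finite
non-abelian AC-group, where `S 1, ..., S n` are the distinct centralizers of
non-central elements, ordered by increasing cardinality. -/
theorem laplacian_spectrum_nc_graph_AC_group
    (G : Type*) [Group G] [Fintype G]
    (hna : ¬ ∀ a b : G, a * b = b * a)
    (hAC : ∀ x : G, x ∉ Subgroup.center G →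
      ∀ a ∈ Subgroup.centralizer {x}, ∀ b ∈ Subgroup.centralizer {x}, a * b = b * a)
    (n : ℕ) (S : Fin n → Subgroup G)
    (hinj : Function.Injective S)
    (hcent : ∀ i, ∃ x : G, x ∉ Subgroup.center G ∧ S i = Subgroup.centralizer {x})
    (hall : ∀ x : G, x ∉ Subgroup.center G → ∃ i, Subgroup.centralizer {x} = S i)
    (hmono : Monotone fun i => Nat.card (S i)) :
    ncCharpoly G =
      X *
      (∏ i : Fin n,
        (X - C ((Fintype.card G : ℝ) - (Nat.card (S i) : ℝ))) ^
          (Nat.card (S i) - Nat.card (Subgroup.center G) - 1)) *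
      (X - C ((Fintype.card G : ℝ) - (Nat.card (Subgroup.center G) : ℝ))) ^ (n - 1) :=
  laplacian_spectrum_nc_graph_AC_group_general G hna hAC n S hinj hcent hall
end

section
/- Let G be a finite group such that G/Z(G) is isomorphic to the Suzuki group Sz(2), i.e. the group of order 20 presented by ⟨a, b : a⁵ = b⁴ = 1, b⁻¹ab = a²⟩. Then the Laplacian spectrum of the non-commuting graph 𝒜_G is {0^1, (15|Z(G)|)^{4|Z(G)| − 1}, (16|Z(G)|)^{15|Z(G)| − 5}, (19|Z(G)|)^5}. -/
open Polynomial

/-- The relations of the presentation `⟨a, b : a⁵ = b⁴ = 1, b⁻¹ab = a²⟩` of the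
Suzuki group `Sz(2)`. -/
def szRels : Set (FreeGroup (Fin 2)) :=
  {FreeGroup.of 0 ^ 5, FreeGroup.of 1 ^ 4,
   (FreeGroup.of 1)⁻¹ * FreeGroup.of 0 * FreeGroup.of 1 * (FreeGroup.of 0 ^ 2)⁻¹}

/-!
`Sz(2)` is the affine group `x ↦ a * x + b` of `ZMod 5`. Two non-identity affine maps commute iff
both are translations or both fix the same point, and of two commuting elements of `Sz(2)` one is
a power of the other; hence commutation lifts along `G → G/Z(G) ≅ Sz(2)`, and the non-commuting
graph of `G` is complete multipartite, with one part of size `4|Z(G)|` (translations) and five of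
size `3|Z(G)|` (one for each fixed point).

For a matrix `S` with `S * Y = Z * S` one has `det Z * det (Y - T * S) = det Y * det (Z - S * T)`.
Applied with `S` the incidence matrix of the partition into parts, this reduces the characteristic
matrix of the Laplacian of a complete multipartite graph to a scalar matrix plus a rank-one matrix
indexed by the parts, and applied once more it reduces that one to a `1 × 1` matrix.
-/

open Finset Matrix

namespace Matrix

variable {R m n : Type*} [CommRing R] [Fintype m] [DecidableEq m] [Fintype n] [DecidableEq n]

theorem det_mul_det_sub_mul_comm {Y : Matrix m m R} {Z : Matrix n n R} (S : Matrix n m R)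
    (T : Matrix m n R) (h : S * Y = Z * S) :
    Z.det * (Y - T * S).det = Y.det * (Z - S * T).det := by
  have hblock : fromBlocks 1 0 (-S) Z * fromBlocks Y T S 1 = fromBlocks Y T 0 (Z - S * T) := by
    simp [fromBlocks_multiply, h, sub_eq_neg_add]
  have := congrArg det hblock
  rwa [det_mul, det_fromBlocks_zero₁₂, det_fromBlocks_one₂₂, det_fromBlocks_zero₂₁, det_one,
    one_mul] at this

end Matrix

section PartitionMatrix

variable (R : Type*) {V B : Type*} [CommRing R] [DecidableEq B]

def partitionMatrix (c : V → B) : Matrix B V R := of fun b v => if c v = b then 1 else 0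

variable {R}

theorem mul_partitionMatrix_apply {W : Type*} [Fintype B] (T : Matrix W B R) (c : V → B)
    (w : W) (v : V) : (T * partitionMatrix R c) w v = T w (c v) := by
  rw [mul_apply]
  simp [partitionMatrix]

theorem partitionMatrix_mul_apply {W : Type*} [Fintype V] (c : V → B) (T : Matrix V W R) (b : B)
    (w : W) : (partitionMatrix R c * T) b w = ∑ v with c v = b, T v w := by
  rw [mul_apply]
  simp [partitionMatrix, sum_filter]

theorem partitionMatrix_mul_diagonal [Fintype V] [DecidableEq V] [Fintype B] (c : V → B)
    (y : B → R) :
    partitionMatrix R c * diagonal (fun v => y (c v)) = diagonal y * partitionMatrix R c := by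
  ext b v
  rw [mul_diagonal, diagonal_mul]
  by_cases h : c v = b <;> simp [partitionMatrix, h]

end PartitionMatrix

theorem det_diagonal_X_sub_C_sum_add {R B : Type*} [CommRing R] [Fintype B] [DecidableEq B]
    [Nonempty B] (w : B → R) :
    ((diagonal fun _ => X - C (∑ b, w b)) + of fun b _ => C (w b)).det =
      (X - C (∑ b, w b)) ^ (Fintype.card B - 1) * X := by
  set N := ∑ b, w b
  have hrankOne : ((diagonal fun _ => X - C N) + of fun b _ => C (w b)) =
      (diagonal fun _ => X - C N) -
        (of fun b _ => -C (w b) : Matrix B Unit R[X]) * partitionMatrix R[X] fun _ : B => () := by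
    refine Matrix.ext fun b' b => ?_
    simp [mul_partitionMatrix_apply]
  have key := det_mul_det_sub_mul_comm _ (of fun b _ => -C (w b) : Matrix B Unit R[X])
    (partitionMatrix_mul_diagonal (fun _ : B => ()) fun _ => X - C N)
  have hUnit : (diagonal fun _ : Unit => X - C N).det = X - C N := by simp
  have hB : (diagonal fun _ : B => X - C N).det = (X - C N) ^ Fintype.card B := by simp
  have hX : ((diagonal fun _ => X - C N) - partitionMatrix R[X] (fun _ : B => ()) *
      (of fun b _ => -C (w b) : Matrix B Unit R[X])).det = X := by
    rw [det_unique, Matrix.sub_apply, partitionMatrix_mul_apply]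
    simp [N, ← map_sum]
  rw [← hrankOne, hUnit, hB, hX] at key
  refine (monic_X_sub_C N).isRegular.left ?_
  simp only [key, ← mul_assoc, ← pow_succ', Nat.sub_add_cancel Fintype.card_pos]

theorem prod_comp_eq_prod_mul_prod_pow_card_sub_one {V B M : Type*} [Fintype V] [Fintype B]
    [DecidableEq B] [CommMonoid M] {c : V → B} (hc : Function.Surjective c) (f : B → M) :
    ∏ v, f (c v) = (∏ b, f b) * ∏ b, f b ^ (#{v | c v = b} - 1) := by
  rw [← prod_mul_distrib, ← prod_fiberwise univ c]
  refine prod_congr rfl fun b _ => ?_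
  obtain ⟨v, rfl⟩ := hc b
  rw [prod_congr rfl fun w hw => by rw [(mem_filter.1 hw).2], prod_const, ← pow_succ',
    Nat.sub_add_cancel (card_pos.2 ⟨v, by simp⟩)]

namespace SimpleGraph

variable {R V B : Type*} [CommRing R] [Fintype V] [DecidableEq B]

theorem degree_of_adj_iff_ne (H : SimpleGraph V) [DecidableRel H.Adj] (c : V → B)
    (hH : ∀ u v, H.Adj u v ↔ c u ≠ c v) (v : V) :
    H.degree v = Fintype.card V - #{w | c w = c v} := by
  rw [← card_neighborFinset_eq_degree, neighborFinset_eq_filter, ← card_univ,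
    ← card_filter_add_card_filter_not (s := univ) (fun w => c w = c v)]
  simp [hH, eq_comm]

variable [DecidableEq V] [Fintype B]

theorem charmatrix_lapMatrix_of_adj_iff_ne (H : SimpleGraph V) [DecidableRel H.Adj] (c : V → B)
    (hH : ∀ u v, H.Adj u v ↔ c u ≠ c v) :
    charmatrix (H.lapMatrix R) =
      diagonal (fun v => X - C ((Fintype.card V : R) - #{w | c w = c v})) -
        (of fun u b => if c u = b then 0 else -1 : Matrix V B R[X]) * partitionMatrix R[X] c := by
  refine Matrix.ext fun u v => ?_
  have hdeg : (H.degree v : R) = Fintype.card V - #{w | c w = c v} := by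
    rw [degree_of_adj_iff_ne H c hH, Nat.cast_sub (card_le_univ _)]
  rw [Matrix.sub_apply, mul_partitionMatrix_apply]
  by_cases huv : u = v
  · subst huv
    simp [lapMatrix, degMatrix, hdeg]
  · simp [lapMatrix, degMatrix, huv, hH]
    split_ifs <;> simp

theorem charpoly_lapMatrix_of_adj_iff_ne [Nonempty B] (H : SimpleGraph V) [DecidableRel H.Adj]
    (c : V → B) (hc : Function.Surjective c) (hH : ∀ u v, H.Adj u v ↔ c u ≠ c v) :
    (H.lapMatrix R).charpoly =
      X * (X - C (Fintype.card V : R)) ^ (Fintype.card B - 1) *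
        ∏ b, (X - C ((Fintype.card V : R) - #{v | c v = b})) ^ (#{v | c v = b} - 1) := by
  set N : R := (Fintype.card V : R)
  set m : B → ℕ := fun b => #{v | c v = b}
  set y : B → R[X] := fun b => X - C (N - m b)
  have hN : ∑ b, (m b : R) = N := by
    rw [← Nat.cast_sum, ← card_eq_sum_card_fiberwise (fun v _ => mem_univ (c v)), card_univ]
  have hL := det_mul_det_sub_mul_comm _
    (of fun u b => if c u = b then 0 else -1 : Matrix V B R[X]) (partitionMatrix_mul_diagonal c y)
  rw [← charmatrix_lapMatrix_of_adj_iff_ne H c hH, ← charpoly] at hL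
  have hQ : diagonal y -
      partitionMatrix R[X] c * (of fun u b => if c u = b then 0 else -1 : Matrix V B R[X]) =
      (diagonal fun _ => X - C (∑ b, (m b : R))) + of fun b _ => C (m b : R) := by
    refine Matrix.ext fun b' b => ?_
    rw [Matrix.sub_apply, partitionMatrix_mul_apply]
    simp only [of_apply]
    by_cases hb : b' = b
    · subst hb
      rw [sum_eq_zero fun u hu => if_pos (mem_filter.1 hu).2]
      simp [y, hN]
      ring
    · rw [sum_congr rfl fun u hu => if_neg (by rw [(mem_filter.1 hu).2]; exact hb)]
      simp [hb, m]
  rw [hQ, det_diagonal_X_sub_C_sum_add, hN] at hL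
  simp only [det_diagonal, prod_comp_eq_prod_mul_prod_pow_card_sub_one hc y] at hL
  refine (monic_prod_of_monic univ y fun b _ => monic_X_sub_C (N - m b)).isRegular.left ?_
  simp only [hL, y, m]
  ring

end SimpleGraph

/-- `⟨b, a⟩` is the affine map `x ↦ a * x + b`; the product is composition. -/
@[ext]
structure Aff (R : Type*) [CommRing R] where
  shift : R
  scale : Rˣ

namespace Aff

section CommRing

variable {R : Type*} [CommRing R]

instance : Group (Aff R) where
  mul u v := ⟨u.shift + u.scale * v.shift, u.scale * v.scale⟩
  one := ⟨0, 1⟩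
  inv u := ⟨-(↑u.scale⁻¹ * u.shift), u.scale⁻¹⟩
  mul_assoc u v w := Aff.ext
    (show u.shift + u.scale * v.shift + ↑(u.scale * v.scale) * w.shift =
      u.shift + u.scale * (v.shift + v.scale * w.shift) by push_cast; ring) (mul_assoc _ _ _)
  one_mul u := Aff.ext (by change 0 + 1 * _ = _; simp) (one_mul _)
  mul_one u := Aff.ext (by change _ + _ * 0 = _; simp) (mul_one _)
  inv_mul_cancel u := Aff.ext (by change _ + _ * _ = 0; simp) (inv_mul_cancel _)

@[simp] theorem mul_shift (u v : Aff R) : (u * v).shift = u.shift + u.scale * v.shift := rfl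
@[simp] theorem mul_scale (u v : Aff R) : (u * v).scale = u.scale * v.scale := rfl

def equivProd : Aff R ≃ R × Rˣ where
  toFun u := (u.shift, u.scale)
  invFun p := ⟨p.1, p.2⟩

instance [DecidableEq R] : DecidableEq (Aff R) := equivProd.decidableEq

instance [Fintype R] [DecidableEq R] : Fintype (Aff R) := Fintype.ofEquiv _ equivProd.symm

theorem commute_iff {u v : Aff R} :
    Commute u v ↔ u.shift * (1 - v.scale) = v.shift * (1 - u.scale) := by
  rw [commute_iff_eq, Aff.ext_iff, mul_shift, mul_shift, mul_scale, mul_scale, mul_comm v.scale]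
  constructor
  · rintro ⟨h, -⟩
    linear_combination h
  · intro h
    exact ⟨by linear_combination h, rfl⟩

theorem one_sub_scale_ne_zero {u : Aff R} (h : u.scale ≠ 1) : (1 - u.scale : R) ≠ 0 :=
  sub_ne_zero.2 (Ne.symm (Units.val_eq_one.not.2 h))

end CommRing

section Field

variable {F : Type*} [Field F] [DecidableEq F]

def fixedPoint (u : Aff F) : Option F :=
  if u.scale = 1 then none else some (u.shift / (1 - u.scale))

theorem fixedPoint_eq_none_iff {u : Aff F} : u.fixedPoint = none ↔ u.scale = 1 := by
  unfold fixedPoint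
  split_ifs <;> simp [*]

theorem fixedPoint_eq_some_iff {u : Aff F} {p : F} :
    u.fixedPoint = some p ↔ u.scale ≠ 1 ∧ u.scale * p + u.shift = p := by
  unfold fixedPoint
  split_ifs with h
  · simp [h]
  · simp only [Option.some.injEq, h, ne_eq, not_false_eq_true, true_and,
      div_eq_iff (one_sub_scale_ne_zero h)]
    constructor <;> intro h' <;> linear_combination h'

theorem commute_iff_fixedPoint_eq {u v : Aff F} (hu : u ≠ 1) (hv : v ≠ 1) :
    Commute u v ↔ u.fixedPoint = v.fixedPoint := by
  have shift_ne_zero : ∀ w : Aff F, w ≠ 1 → w.scale = 1 → w.shift ≠ 0 :=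
    fun w hw h1 h0 => hw (Aff.ext h0 h1)
  rw [commute_iff]
  unfold fixedPoint
  by_cases hu1 : u.scale = 1 <;> by_cases hv1 : v.scale = 1 <;> simp only [hu1, hv1, if_true,
    if_false, Units.val_one, sub_self, mul_zero, reduceCtorEq, Option.some.injEq, iff_false]
  · exact mul_ne_zero (shift_ne_zero u hu hu1) (one_sub_scale_ne_zero hv1)
  · exact (mul_ne_zero (shift_ne_zero v hv hv1) (one_sub_scale_ne_zero hu1)).symm
  · rw [div_eq_div_iff (one_sub_scale_ne_zero hu1) (one_sub_scale_ne_zero hv1)]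

end Field

instance : Fact (Nat.Prime 5) := ⟨Nat.prime_five⟩

theorem card_zmod_five : Fintype.card (Aff (ZMod 5)) = 20 := by decide

theorem exists_pow_of_commute_zmod_five (u v : Aff (ZMod 5)) (h : Commute u v) :
    ∃ i : ℕ, v = u ^ i ∨ u = v ^ i := by
  have key : ∀ u v : Aff (ZMod 5), u * v = v * u →
      ∃ i : Fin 5, v = u ^ (i : ℕ) ∨ u = v ^ (i : ℕ) := by
    decide
  obtain ⟨i, hi⟩ := key u v h.eq
  exact ⟨i, hi⟩

theorem card_filter_ne_one_zmod_five : #{u : Aff (ZMod 5) | u ≠ 1} = 19 := by decide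

theorem card_filter_fixedPoint_eq_none_zmod_five :
    #{u : Aff (ZMod 5) | u ≠ 1 ∧ u.fixedPoint = none} = 4 := by
  simp_rw [fixedPoint_eq_none_iff]
  decide

theorem card_filter_fixedPoint_eq_some_zmod_five (p : ZMod 5) :
    #{u : Aff (ZMod 5) | u ≠ 1 ∧ u.fixedPoint = some p} = 3 := by
  simp_rw [fixedPoint_eq_some_iff]
  revert p
  decide

end Aff

theorem forall_pow_mul_of_forall_mul {M : Type*} [Monoid M] {P : M → Prop} {x : M}
    (h : ∀ g, P g → P (x * g)) (k : ℕ) (g : M) (hg : P g) : P (x ^ k * g) := by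
  induction k generalizing g with
  | zero => simpa using hg
  | succ k ih => rw [pow_succ, mul_assoc]; exact ih _ (h g hg)

section Presentation

open PresentedGroup

/-- `a ↦ (x ↦ x + 1)`, `b ↦ (x ↦ 3 * x)`; then `b⁻¹ a b = (x ↦ x + 2) = a ^ 2`. -/
def szGen : Fin 2 → Aff (ZMod 5) := ![⟨1, 1⟩, ⟨0, ⟨3, 2, by decide, by decide⟩⟩]

theorem szGen_rels : ∀ r ∈ szRels, FreeGroup.lift szGen r = 1 := by
  simp only [szRels, Set.mem_insert_iff, Set.mem_singleton_iff, forall_eq_or_imp, forall_eq,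
    map_pow, map_mul, map_inv, FreeGroup.lift_apply_of]
  decide

def szToAff : PresentedGroup szRels →* Aff (ZMod 5) := toGroup szGen_rels

theorem szRels_of_zero_pow : (of 0 : PresentedGroup szRels) ^ 5 = 1 := by
  have := one_of_mem (rels := szRels) (x := FreeGroup.of 0 ^ 5) (by simp [szRels])
  rwa [map_pow] at this

theorem szRels_of_one_pow : (of 1 : PresentedGroup szRels) ^ 4 = 1 := by
  have := one_of_mem (rels := szRels) (x := FreeGroup.of 1 ^ 4) (by simp [szRels])
  rwa [map_pow] at this

theorem szRels_inv_of_one_mul_pow (i : ℕ) :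
    (of 1 : PresentedGroup szRels)⁻¹ * of 0 ^ i = of 0 ^ (2 * i) * (of 1)⁻¹ := by
  have hconj : (of 1 : PresentedGroup szRels)⁻¹ * of 0 * of 1 = of 0 ^ 2 := by
    have := mk_eq_mk_of_mul_inv_mem (rels := szRels)
      (x := (FreeGroup.of 1)⁻¹ * FreeGroup.of 0 * FreeGroup.of 1) (y := FreeGroup.of 0 ^ 2)
      (by simp [szRels])
    rwa [map_mul, map_mul, map_inv, map_pow] at this
  have h : SemiconjBy (of 1 : PresentedGroup szRels)⁻¹ (of 0) (of 0 ^ 2) := by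
    rw [SemiconjBy, ← hconj, mul_inv_cancel_right]
  rw [pow_mul]
  exact h.pow_right i

theorem szRels_exists_eq_pow_mul_pow (g : PresentedGroup szRels) :
    ∃ i : Fin 5, ∃ j : Fin 4, g = of 0 ^ (i : ℕ) * (of 1)⁻¹ ^ (j : ℕ) := by
  suffices h : ∃ i j : ℕ, g = of 0 ^ i * (of 1)⁻¹ ^ j by
    obtain ⟨i, j, rfl⟩ := h
    refine ⟨⟨i % 5, Nat.mod_lt _ (by norm_num)⟩, ⟨j % 4, Nat.mod_lt _ (by norm_num)⟩,
      ?_⟩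
    rw [pow_eq_pow_mod i szRels_of_zero_pow,
      pow_eq_pow_mod j (by rw [inv_pow, szRels_of_one_pow, inv_one])]
  set P := fun g : PresentedGroup szRels => ∃ i j : ℕ, g = of 0 ^ i * (of 1)⁻¹ ^ j
  have mul_of_zero : ∀ g, P g → P (of 0 * g) := by
    rintro _ ⟨i, j, rfl⟩
    exact ⟨i + 1, j, by rw [← mul_assoc, ← pow_succ']⟩
  have inv_of_zero_mul : ∀ g, P g → P ((of 0)⁻¹ * g) := by
    rintro _ ⟨i, j, rfl⟩
    have : (of 0 : PresentedGroup szRels)⁻¹ = of 0 ^ 4 :=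
      inv_eq_of_mul_eq_one_right (by rw [← pow_succ', szRels_of_zero_pow])
    exact ⟨4 + i, j, by rw [this, ← mul_assoc, ← pow_add]⟩
  have inv_of_one_mul : ∀ g, P g → P ((of 1)⁻¹ * g) := by
    rintro _ ⟨i, j, rfl⟩
    exact ⟨2 * i, j + 1,
      by rw [← mul_assoc, szRels_inv_of_one_mul_pow, mul_assoc, ← pow_succ']⟩
  have mul_of_one : ∀ g, P g → P (of 1 * g) := by
    have : (of 1 : PresentedGroup szRels) = (of 1)⁻¹ ^ 3 := by
      rw [inv_pow, eq_comm]
      exact inv_eq_of_mul_eq_one_left (by rw [← pow_succ', szRels_of_one_pow])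
    rw [this]
    exact forall_pow_mul_of_forall_mul inv_of_one_mul 3
  have hg : g ∈ Subgroup.closure (Set.range PresentedGroup.of) := by simp
  induction hg using Subgroup.closure_induction_left with
  | one => exact ⟨0, 0, by simp⟩
  | mul_left x hx y _ ih =>
    obtain ⟨k, rfl⟩ := hx
    match k with
    | 0 => exact mul_of_zero _ ih
    | 1 => exact mul_of_one _ ih
  | inv_mul_cancel x hx y _ ih =>
    obtain ⟨k, rfl⟩ := hx
    match k with
    | 0 => exact inv_of_zero_mul _ ih
    | 1 => exact inv_of_one_mul _ ih

theorem szToAff_bijective : Function.Bijective szToAff := by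
  have hsurj : Function.Surjective szToAff := by
    have key : ∀ u : Aff (ZMod 5), ∃ i : Fin 5, ∃ j : Fin 4,
        szGen 0 ^ (i : ℕ) * (szGen 1)⁻¹ ^ (j : ℕ) = u := by
      decide
    intro u
    obtain ⟨i, j, hu⟩ := key u
    exact ⟨of 0 ^ (i : ℕ) * (of 1)⁻¹ ^ (j : ℕ), by simpa [szToAff] using hu⟩
  have hcover : Function.Surjective fun ij : Fin 5 × Fin 4 =>
      (of 0 : PresentedGroup szRels) ^ (ij.1 : ℕ) * (of 1)⁻¹ ^ (ij.2 : ℕ) := fun g => by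
    obtain ⟨i, j, rfl⟩ := szRels_exists_eq_pow_mul_pow g
    exact ⟨(i, j), rfl⟩
  have : Finite (PresentedGroup szRels) := Finite.of_surjective _ hcover
  refine hsurj.bijective_of_nat_card_le ?_
  rw [Nat.card_eq_fintype_card (α := Aff (ZMod 5)), Aff.card_zmod_five]
  simpa using Nat.card_le_card_of_surjective _ hcover

noncomputable def szEquiv : PresentedGroup szRels ≃* Aff (ZMod 5) :=
  MulEquiv.ofBijective szToAff szToAff_bijective

end Presentation

section CentralQuotient

variable {G K : Type*} [Group G] [Group K]

theorem commute_of_map_eq_pow (q : G →* K) (hq : q.ker ≤ Subgroup.center G) {x y : G} {i : ℕ}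
    (h : q y = q x ^ i) : Commute x y := by
  have hz : y * (x ^ i)⁻¹ ∈ Subgroup.center G :=
    hq (by rw [MonoidHom.mem_ker, map_mul, map_inv, map_pow, h, mul_inv_cancel])
  have : Commute x (y * (x ^ i)⁻¹ * x ^ i) :=
    (show Commute x _ from Subgroup.mem_center_iff.1 hz x).mul_right (Commute.self_pow x i)
  rwa [inv_mul_cancel_right] at this

theorem commute_iff_commute_map (q : G →* K) (hq : q.ker ≤ Subgroup.center G)
    (hK : ∀ u v : K, Commute u v → ∃ i : ℕ, v = u ^ i ∨ u = v ^ i) {x y : G} :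
    Commute x y ↔ Commute (q x) (q y) := by
  refine ⟨fun h => h.map q, fun h => ?_⟩
  obtain ⟨i, hi | hi⟩ := hK _ _ h
  · exact commute_of_map_eq_pow q hq hi
  · exact (commute_of_map_eq_pow q hq hi).symm

variable [Fintype G] [Fintype K] [DecidableEq K]

theorem MonoidHom.card_filter_comp (q : G →* K) (hq : Function.Surjective q) (P : K → Prop)
    [DecidablePred P] : #{x | P (q x)} = Nat.card q.ker * #{u | P u} := by
  have hker : Nat.card q.ker = #{x | q x = 1} := by
    rw [← Fintype.card_subtype, ← Nat.card_eq_fintype_card]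
    rfl
  rw [card_eq_sum_card_fiberwise (f := q) (t := {u | P u}) (by intro x hx; simpa using hx),
    sum_const_nat (m := Nat.card q.ker), mul_comm]
  intro u hu
  rw [filter_filter, hker, ← MonoidHom.card_fiber_eq_of_mem_range q (hq u) ⟨1, map_one q⟩]
  congr 1
  ext x
  simp only [mem_filter, mem_univ, true_and, and_iff_right_iff_imp]
  rintro rfl
  simpa using hu

theorem MonoidHom.card_filter_notMem_comp {N : Subgroup G} [DecidablePred (· ∉ N)] (q : G →* K)
    (hq : Function.Surjective q) (hker : q.ker = N) (P : K → Prop) [DecidablePred P] :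
    #{x : {x : G // x ∉ N} | P (q x)} = Nat.card N * #{u | u ≠ 1 ∧ P u} := by
  have hne : ∀ x, x ∉ N ↔ q x ≠ 1 := fun x => by rw [← hker, MonoidHom.mem_ker]
  rw [← Fintype.card_subtype,
    Fintype.card_congr (Equiv.subtypeSubtypeEquivSubtypeInter (· ∉ N) fun x => P (q x)),
    Fintype.card_subtype, filter_congr fun x _ => and_congr_left_iff.2 fun _ => hne x,
    q.card_filter_comp hq fun u => u ≠ 1 ∧ P u, hker]

end CentralQuotient

section CentralQuotientSz2

variable {G : Type*} [Group G] {q : G →* Aff (ZMod 5)}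

theorem nonCommGraph_adj_iff_fixedPoint_ne (hker : q.ker = Subgroup.center G)
    (x y : {x : G // x ∉ Subgroup.center G}) :
    (nonCommGraph G).Adj x y ↔ (q x).fixedPoint ≠ (q y).fixedPoint := by
  have hne : ∀ x : {x : G // x ∉ Subgroup.center G}, q x ≠ 1 := fun x h1 =>
    x.2 (hker.le (MonoidHom.mem_ker.2 h1))
  exact ((commute_iff_commute_map q hker.le Aff.exists_pow_of_commute_zmod_five).trans
    (Aff.commute_iff_fixedPoint_eq (hne x) (hne y))).not

variable [Fintype G] [DecidablePred (· ∉ Subgroup.center G)]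

theorem card_notMem_center_of_ker_eq (hq : Function.Surjective q)
    (hker : q.ker = Subgroup.center G) :
    Fintype.card {x : G // x ∉ Subgroup.center G} = 19 * Nat.card (Subgroup.center G) := by
  simpa [Aff.card_filter_ne_one_zmod_five, mul_comm] using
    q.card_filter_notMem_comp hq hker fun _ => True

theorem card_filter_fixedPoint_eq_none (hq : Function.Surjective q)
    (hker : q.ker = Subgroup.center G) :
    #{x : {x : G // x ∉ Subgroup.center G} | (q x).fixedPoint = none} =
      4 * Nat.card (Subgroup.center G) := by
  rw [q.card_filter_notMem_comp hq hker (·.fixedPoint = none),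
    Aff.card_filter_fixedPoint_eq_none_zmod_five, mul_comm]

theorem card_filter_fixedPoint_eq_some (hq : Function.Surjective q)
    (hker : q.ker = Subgroup.center G) (p : ZMod 5) :
    #{x : {x : G // x ∉ Subgroup.center G} | (q x).fixedPoint = some p} =
      3 * Nat.card (Subgroup.center G) := by
  rw [q.card_filter_notMem_comp hq hker (·.fixedPoint = some p),
    Aff.card_filter_fixedPoint_eq_some_zmod_five, mul_comm]

theorem surjective_fixedPoint_comp (hq : Function.Surjective q)
    (hker : q.ker = Subgroup.center G) :
    Function.Surjective fun x : {x : G // x ∉ Subgroup.center G} => (q x).fixedPoint := by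
  have hn : 0 < Nat.card (Subgroup.center G) := Nat.card_pos
  rintro (_ | p)
  · obtain ⟨x, hx⟩ := card_pos.1 (by rw [card_filter_fixedPoint_eq_none hq hker]; omega)
    exact ⟨x, (mem_filter.1 hx).2⟩
  · obtain ⟨x, hx⟩ := card_pos.1 (by rw [card_filter_fixedPoint_eq_some hq hker p]; omega)
    exact ⟨x, (mem_filter.1 hx).2⟩

end CentralQuotientSz2

/-- Laplacian spectrum of the non-commuting graph of a finite group
`G` with `G/Z(G) ≅ Sz(2)`. -/
theorem laplacian_spectrum_nc_graph_central_factor_Sz2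
    (G : Type*) [Group G] [Fintype G]
    (h : Nonempty ((G ⧸ Subgroup.center G) ≃* PresentedGroup szRels)) :
    ncCharpoly G =
      X *
      (X - C (15 * (Nat.card (Subgroup.center G) : ℝ))) ^
        (4 * Nat.card (Subgroup.center G) - 1) *
      (X - C (16 * (Nat.card (Subgroup.center G) : ℝ))) ^
        (15 * Nat.card (Subgroup.center G) - 5) *
      (X - C (19 * (Nat.card (Subgroup.center G) : ℝ))) ^ 5 := by
  obtain ⟨φ⟩ := h
  let q : G →* Aff (ZMod 5) := (φ.trans szEquiv).toMonoidHom.comp (QuotientGroup.mk' _)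
  have hq : Function.Surjective q :=
    (φ.trans szEquiv).surjective.comp (QuotientGroup.mk'_surjective _)
  have hker : q.ker = Subgroup.center G :=
    (MonoidHom.ker_comp_of_injective _ _ (φ.trans szEquiv).injective).trans
      (QuotientGroup.ker_mk' _)
  -- the instances chosen inside `ncLap`, so that the lemmas below produce literally the same
  -- `Fintype` instance on the vertex type as the goal
  let _ := Classical.decEq G
  let _ : DecidablePred (· ∉ Subgroup.center G) := fun _ => Classical.dec _
  let _ : DecidableRel (nonCommGraph G).Adj := fun _ _ => Classical.dec _
  unfold ncCharpoly ncLap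
  rw [SimpleGraph.charpoly_lapMatrix_of_adj_iff_ne _ _ (surjective_fixedPoint_comp hq hker)
      (nonCommGraph_adj_iff_fixedPoint_ne hker), Fintype.prod_option,
    card_filter_fixedPoint_eq_none hq hker,
    prod_congr rfl fun p _ => by rw [card_filter_fixedPoint_eq_some hq hker p],
    prod_const, ← pow_mul, card_univ, ZMod.card, Fintype.card_option, ZMod.card,
    card_notMem_center_of_ker_eq hq hker]
  set n := Nat.card (Subgroup.center G)
  have h15 : (↑(19 * n) - ↑(4 * n) : ℝ) = 15 * n := by push_cast; ring
  have h16 : (↑(19 * n) - ↑(3 * n) : ℝ) = 16 * n := by push_cast; ring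
  rw [h15, h16, show (3 * n - 1) * 5 = 15 * n - 5 by omega]
  push_cast
  ring
end

section
/- Let p be a prime and let G be a finite group such that G/Z(G) is isomorphic to ℤ_p × ℤ_p. Then the Laplacian spectrum of the non-commuting graph 𝒜_G is {0^1, ((p² − p)|Z(G)|)^{(p² − 1)|Z(G)| − p − 1}, ((p² − 1)|Z(G)|)^p}. -/
open Polynomial

/-!
Two non-central elements `x, y` commute iff `x̄, ȳ` generate the same subgroup of order `p` of
`G/Z(G)`: if they commute, both lie in the image of the centralizer of `x`, which is proper because
the centralizer is a proper subgroup containing `Z(G)`, and a proper subgroup of a group of order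
`p²` containing `x̄ ≠ 1` is `⟨x̄⟩`. Hence the non-commuting graph is complete multipartite, with one
part of `(p - 1)|Z(G)|` elements for each subgroup of order `p`; counting the `(p² - 1)|Z(G)|`
vertices shows that there are `p + 1` parts.

For a complete multipartite graph on `n` vertices with `k` parts of size `m`, let `F` be the
incidence matrix of the parts and `J` the all-ones matrix. The Laplacian is
`(n - m) I + F (I - J) Fᵀ`, and since `Fᵀ F = m I`, the characteristic polynomial of `F (I - J) Fᵀ`
is `X ^ (n - k)` times that of `m (I - J)`, a rank-one perturbation of a scalar matrix.
-/

open Matrix Finset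

namespace Matrix
variable {n R : Type*} [Fintype n] [DecidableEq n] [CommRing R]

theorem charpoly_scalar_add (M : Matrix n n R) (c : R) :
    (scalar n c + M).charpoly = M.charpoly.comp (X - C c) := by
  rw [add_comm, ← sub_neg_eq_add, ← map_neg, charpoly_sub_scalar, C_neg, ← sub_eq_add_neg]

theorem charpoly_scalar_add_vecMulVec [Nonempty n] (c : R) (u v : n → R) :
    (scalar n c + vecMulVec u v).charpoly =
      (X - C c) ^ (Fintype.card n - 1) * (X - C c - C (u ⬝ᵥ v)) := by
  have h : Fintype.card n = Fintype.card n - 1 + 1 := (Nat.sub_add_cancel Fintype.card_pos).symm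
  rw [charpoly_scalar_add, charpoly_vecMulVec, h, Nat.add_sub_cancel, pow_succ]
  simp only [sub_comp, mul_comp, pow_comp, X_comp, smul_eq_C_mul, C_comp]
  ring

end Matrix

section FiberMatrix
variable {V P : Type*} [DecidableEq P] (f : V → P)

theorem card_eq_card_mul_of_card_fiber [Fintype V] [Fintype P] {m : ℕ}
    (hfib : ∀ q, #{x | f x = q} = m) : Fintype.card V = Fintype.card P * m := by
  rw [← card_univ, card_eq_sum_card_fiberwise (fun x _ => mem_univ (f x))]
  simp [hfib, mul_comm]

variable (R : Type*)

def fiberMatrix [Zero R] [One R] : Matrix V P R :=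
  of fun x q => if f x = q then 1 else 0

variable [CommRing R]

theorem fiberMatrix_mul_transpose [Fintype P] :
    fiberMatrix f R * (fiberMatrix f R)ᵀ = of fun x y => if f x = f y then 1 else 0 := by
  ext x y
  simp [fiberMatrix, mul_apply, eq_comm]

theorem transpose_fiberMatrix_mul [Fintype V] {m : ℕ} (hfib : ∀ q, #{x | f x = q} = m) :
    (fiberMatrix f R)ᵀ * fiberMatrix f R = (m : R) • 1 := by
  ext q q'
  simp only [fiberMatrix, mul_apply, transpose_apply, of_apply, boole_mul, ← ite_and,
    Matrix.smul_apply]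
  by_cases h : q = q'
  · subst h
    simp [Finset.sum_boole, hfib]
  · have : ∀ x, ¬ (f x = q ∧ f x = q') := fun x hx => h (hx.1.symm.trans hx.2)
    simp [h, this]

theorem fiberMatrix_mulVec_one [Fintype P] : fiberMatrix f R *ᵥ 1 = 1 := by
  ext x
  simp [fiberMatrix, mulVec, dotProduct]

theorem fiberMatrix_mul_vecMulVec_one_mul_transpose [Fintype P] :
    fiberMatrix f R * vecMulVec (1 : P → R) (1 : P → R) * (fiberMatrix f R)ᵀ =
      vecMulVec (1 : V → R) (1 : V → R) := by
  rw [mul_vecMulVec, vecMulVec_mul, vecMul_transpose, fiberMatrix_mulVec_one]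

end FiberMatrix

namespace SimpleGraph
variable {V P R : Type*} [Fintype V] [DecidableEq V] [Fintype P] [DecidableEq P] [CommRing R]
  (Γ : SimpleGraph V) [DecidableRel Γ.Adj] {f : V → P} (hΓ : ∀ x y, Γ.Adj x y ↔ f x ≠ f y)
  {m : ℕ} (hfib : ∀ q, #{x | f x = q} = m)
include hΓ hfib

omit [Fintype P] in
theorem degree_of_adj_iff_ne_s3 (x : V) : Γ.degree x = Fintype.card V - m := by
  rw [← card_neighborFinset_eq_degree, ← hfib (f x), ← card_compl]
  congr 1
  ext y
  simp [hΓ, eq_comm]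

theorem lapMatrix_eq_of_adj_iff_ne :
    Γ.lapMatrix R = scalar V ((Fintype.card V : R) - m) +
      fiberMatrix f R * (1 - vecMulVec (1 : P → R) (1 : P → R)) * (fiberMatrix f R)ᵀ := by
  rw [Matrix.mul_sub, Matrix.sub_mul, Matrix.mul_one, fiberMatrix_mul_transpose,
    fiberMatrix_mul_vecMulVec_one_mul_transpose]
  ext x y
  by_cases hxy : x = y
  · subst hxy
    have hm : m ≤ Fintype.card V := hfib (f x) ▸ card_le_univ _
    simp [lapMatrix, degMatrix, degree_of_adj_iff_ne_s3 Γ hΓ hfib, Nat.cast_sub hm]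
  · by_cases hf : f x = f y <;> simp [lapMatrix, degMatrix, hxy, hΓ, hf]

theorem charpoly_lapMatrix_of_adj_iff_ne_s3 [Nonempty V] :
    (Γ.lapMatrix R).charpoly = X * (X - C ((Fintype.card V : R) - m)) ^
      (Fintype.card V - Fintype.card P) * (X - C (Fintype.card V : R)) ^ (Fintype.card P - 1) := by
  obtain ⟨v⟩ := ‹Nonempty V›
  have : Nonempty P := ⟨f v⟩
  have hm : 1 ≤ m := hfib (f v) ▸ card_pos.mpr ⟨v, by simp⟩
  have hcard := card_eq_card_mul_of_card_fiber f hfib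
  have hPV : Fintype.card P ≤ Fintype.card V := hcard ▸ Nat.le_mul_of_pos_right _ hm
  have hsmul : ((m : R) • 1 : Matrix P P R) * (1 - vecMulVec (1 : P → R) (1 : P → R)) =
      scalar P (m : R) + vecMulVec (fun _ => -(m : R)) (1 : P → R) := by
    ext q q'
    by_cases h : q = q' <;> simp [vecMulVec, one_apply, Matrix.natCast_apply, h]
  have hdot : (fun _ => -(m : R)) ⬝ᵥ (1 : P → R) = -(Fintype.card V : R) := by
    simp [dotProduct, hcard]
  rw [lapMatrix_eq_of_adj_iff_ne Γ hΓ hfib, charpoly_scalar_add, charpoly_mul_comm_of_le _ _ hPV,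
    ← Matrix.mul_assoc, transpose_fiberMatrix_mul f R hfib, hsmul, charpoly_scalar_add_vecMulVec,
    hdot]
  simp only [mul_comp, pow_comp, sub_comp, neg_comp, X_comp, C_comp, C_neg, C_sub]
  ring

end SimpleGraph

namespace Subgroup
variable {Q : Type*} [Group Q] {p : ℕ} (hp : p.Prime) (hQ : Nat.card Q = p ^ 2)
include hp hQ

theorem card_eq_prime_of_ne_bot_of_ne_top {H : Subgroup Q} (hbot : H ≠ ⊥) (htop : H ≠ ⊤) :
    Nat.card H = p := by
  have : Finite Q := Nat.finite_of_card_ne_zero (by simp [hQ, hp.ne_zero])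
  obtain ⟨i, hi, hcard⟩ := (Nat.dvd_prime_pow hp).mp (hQ ▸ H.card_subgroup_dvd_card)
  interval_cases i
  · exact absurd (card_eq_one.mp hcard) hbot
  · simpa using hcard
  · exact absurd (eq_top_of_card_eq H (hcard.trans hQ.symm)) htop

theorem zpowers_eq_of_mem_of_ne_top {H : Subgroup Q} (htop : H ≠ ⊤) {u : Q} (hu : u ∈ H)
    (hu1 : u ≠ 1) : zpowers u = H := by
  have : Finite Q := Nat.finite_of_card_ne_zero (by simp [hQ, hp.ne_zero])
  have hle : zpowers u ≤ H := zpowers_le.mpr hu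
  refine eq_of_le_of_card_ge hle (le_of_eq ?_)
  rw [card_eq_prime_of_ne_bot_of_ne_top hp hQ (ne_bot_of_le_ne_bot (zpowers_ne_bot.mpr hu1) hle)
    htop, card_eq_prime_of_ne_bot_of_ne_top hp hQ (zpowers_ne_bot.mpr hu1)
    (ne_top_of_le_ne_top htop hle)]

end Subgroup

section CenterQuotient
open Subgroup
variable {G : Type*} [Group G]

theorem map_centralizer_singleton_ne_top {x : G} (hx : x ∉ center G) :
    (centralizer {x}).map (QuotientGroup.mk' (center G)) ≠ ⊤ := by
  intro htop
  have h := comap_map_eq (QuotientGroup.mk' (center G)) (centralizer {x})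
  rw [htop, comap_top, QuotientGroup.ker_mk', sup_of_le_left (center_le_centralizer _)] at h
  exact hx (centralizer_eq_top_iff_subset.mp h.symm rfl)

theorem commute_of_mem_zpowers_mk {x y : G}
    (h : (y : G ⧸ center G) ∈ zpowers (x : G ⧸ center G)) : Commute x y := by
  obtain ⟨j, hj⟩ := h
  have hc : (x ^ j)⁻¹ * y ∈ center G := QuotientGroup.eq.mp (by simpa using hj)
  have hy : y = x ^ j * ((x ^ j)⁻¹ * y) := by group
  rw [hy]
  exact ((Commute.refl x).zpow_right j).mul_right (mem_center_iff.mp hc x)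

variable {p : ℕ} (hQ : Nat.card (G ⧸ center G) = p ^ 2)

include hQ in
theorem card_noncentral [Finite G] :
    Nat.card {x : G // x ∉ center G} = (p ^ 2 - 1) * Nat.card (center G) := by
  have := Fintype.ofFinite G
  classical
  rw [Nat.card_eq_fintype_card, Fintype.card_subtype_compl, ← Nat.card_eq_fintype_card,
    ← Nat.card_eq_fintype_card, card_eq_card_quotient_mul_card_subgroup (center G), hQ, tsub_mul,
    one_mul]

variable (hp : p.Prime)
include hp hQ

theorem card_zpowers_mk {x : G} (hx : x ∉ center G) :
    Nat.card (zpowers (x : G ⧸ center G)) = p := by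
  refine card_eq_prime_of_ne_bot_of_ne_top hp hQ ?_ ?_
  · exact zpowers_ne_bot.mpr (mt (QuotientGroup.eq_one_iff x).mp hx)
  · exact ne_top_of_le_ne_top (map_centralizer_singleton_ne_top hx)
      (zpowers_le.mpr (mem_map_of_mem _ (mem_centralizer_singleton_iff.mpr rfl)))

theorem mem_zpowers_mk_of_commute {x y : G} (hx : x ∉ center G) (hxy : Commute x y) :
    (y : G ⧸ center G) ∈ zpowers (x : G ⧸ center G) := by
  refine (zpowers_eq_of_mem_of_ne_top hp hQ (map_centralizer_singleton_ne_top hx)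
    (mem_map_of_mem _ (mem_centralizer_singleton_iff.mpr rfl))
    (mt (QuotientGroup.eq_one_iff x).mp hx)).ge ?_
  exact mem_map_of_mem _ (mem_centralizer_singleton_iff.mpr hxy.eq.symm)

theorem commute_iff_zpowers_mk_eq {x y : G} (hx : x ∉ center G) (hy : y ∉ center G) :
    Commute x y ↔ zpowers (x : G ⧸ center G) = zpowers (y : G ⧸ center G) := by
  refine ⟨fun hxy => le_antisymm ?_ ?_, fun h => commute_of_mem_zpowers_mk (h ▸ mem_zpowers _)⟩
  · exact zpowers_le.mpr (mem_zpowers_mk_of_commute hQ hp hy hxy.symm)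
  · exact zpowers_le.mpr (mem_zpowers_mk_of_commute hQ hp hx hxy)

def zpowersMk (x : {x : G // x ∉ center G}) : {H : Subgroup (G ⧸ center G) // Nat.card H = p} :=
  ⟨zpowers ((x : G) : G ⧸ center G), card_zpowers_mk hQ hp x.2⟩

theorem nonCommGraph_adj_iff_zpowersMk_ne (x y : {x : G // x ∉ center G}) :
    (nonCommGraph G).Adj x y ↔ zpowersMk hQ hp x ≠ zpowersMk hQ hp y := by
  rw [Ne, Subtype.ext_iff]
  exact not_congr (commute_iff_zpowers_mk_eq hQ hp x.2 y.2)

theorem card_zpowersMk_fiber (H : {H : Subgroup (G ⧸ center G) // Nat.card H = p}) :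
    Nat.card {x // zpowersMk hQ hp x = H} = (p - 1) * Nat.card (center G) := by
  have : Finite H := Nat.finite_of_card_ne_zero (by rw [H.2]; exact hp.ne_zero)
  have key : ∀ x : G, (x ∉ center G ∧ zpowers (x : G ⧸ center G) = H) ↔
      (x : G ⧸ center G) ∈ (H : Set (G ⧸ center G)) \ {1} := by
    intro x
    rw [Set.mem_sdiff, Set.mem_singleton_iff, QuotientGroup.eq_one_iff]
    refine ⟨fun ⟨hx, h⟩ => ⟨h ▸ mem_zpowers _, hx⟩, fun ⟨hxH, hx⟩ => ⟨hx, ?_⟩⟩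
    exact eq_of_le_of_card_ge (zpowers_le.mpr hxH) (by rw [H.2, card_zpowers_mk hQ hp hx])
  calc _ = Nat.card (QuotientGroup.mk ⁻¹' ((H : Set (G ⧸ center G)) \ {1})) :=
        Nat.card_congr ((Equiv.subtypeEquivRight fun x => Subtype.ext_iff).trans
          ((Equiv.subtypeSubtypeEquivSubtypeInter _ _).trans (Equiv.subtypeEquivRight key)))
    _ = Nat.card (center G) * ((H : Set (G ⧸ center G)) \ {1}).ncard := by
        rw [Nat.card_congr (QuotientGroup.preimageMkEquivSubgroupProdSet _ _), Nat.card_prod,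
          Nat.card_coe_set_eq]
    _ = (p - 1) * Nat.card (center G) := by
        rw [Set.ncard_sdiff_singleton_of_mem (one_mem _), ← Nat.card_coe_set_eq,
          SetLike.coe_sort_coe, H.2, mul_comm]

theorem card_subgroups_card_eq_prime [Finite G] :
    Nat.card {H : Subgroup (G ⧸ center G) // Nat.card H = p} = p + 1 := by
  classical
  have := Fintype.ofFinite G
  have := Fintype.ofFinite {H : Subgroup (G ⧸ center G) // Nat.card H = p}
  have h := card_eq_card_mul_of_card_fiber (zpowersMk hQ hp) fun H => by
    rw [← Fintype.card_subtype, ← Nat.card_eq_fintype_card, card_zpowersMk_fiber]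
  rw [← Nat.card_eq_fintype_card, ← Nat.card_eq_fintype_card, card_noncentral hQ, ← one_pow 2,
    Nat.sq_sub_sq, one_pow, mul_assoc] at h
  exact (Nat.eq_of_mul_eq_mul_right (Nat.mul_pos (Nat.sub_pos_of_lt hp.one_lt) Nat.card_pos) h).symm

theorem nonempty_noncentral : Nonempty {x : G // x ∉ center G} := by
  by_contra h
  have htop : center G = ⊤ := eq_top_iff.mpr fun x _ => by_contra fun hx => h ⟨⟨x, hx⟩⟩
  rw [← index, htop, index_top] at hQ
  exact (Nat.one_lt_pow two_ne_zero hp.one_lt).ne hQ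

end CenterQuotient

theorem ncCharpoly_eq_charpoly_lapMatrix (G : Type*) [Group G] [Fintype G] [DecidableEq G]
    [DecidablePred (· ∈ Subgroup.center G)] [DecidableRel (nonCommGraph G).Adj] :
    ncCharpoly G = ((nonCommGraph G).lapMatrix ℝ).charpoly := by
  unfold ncCharpoly ncLap
  congr!

/-- Laplacian spectrum of the non-commuting graph of a finite group
`G` with `G/Z(G) ≅ ℤ_p × ℤ_p`. -/
theorem laplacian_spectrum_nc_graph_central_factor_ZpZp
    (p : ℕ) (hp : p.Prime) (G : Type*) [Group G] [Fintype G]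
    (h : Nonempty ((G ⧸ Subgroup.center G) ≃*
      (Multiplicative (ZMod p) × Multiplicative (ZMod p)))) :
    ncCharpoly G =
      X *
      (X - C (((p : ℝ) ^ 2 - (p : ℝ)) * (Nat.card (Subgroup.center G) : ℝ))) ^
        ((p ^ 2 - 1) * Nat.card (Subgroup.center G) - p - 1) *
      (X - C (((p : ℝ) ^ 2 - 1) * (Nat.card (Subgroup.center G) : ℝ))) ^ p := by
  classical
  obtain ⟨e⟩ := h
  have hQ : Nat.card (G ⧸ Subgroup.center G) = p ^ 2 := by
    rw [Nat.card_congr e.toEquiv, Nat.card_prod, Nat.card_congr Multiplicative.toAdd,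
      Nat.card_zmod, sq]
  have : Fintype {H : Subgroup (G ⧸ Subgroup.center G) // Nat.card H = p} := Fintype.ofFinite _
  have := nonempty_noncentral hQ hp
  rw [ncCharpoly_eq_charpoly_lapMatrix,
    SimpleGraph.charpoly_lapMatrix_of_adj_iff_ne_s3 _ (nonCommGraph_adj_iff_zpowersMk_ne hQ hp)
      fun H => by rw [← Fintype.card_subtype, ← Nat.card_eq_fintype_card, card_zpowersMk_fiber],
    ← Nat.card_eq_fintype_card, ← Nat.card_eq_fintype_card, card_subgroups_card_eq_prime hQ hp,
    card_noncentral hQ, Nat.sub_sub, Nat.add_sub_cancel]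
  push_cast [Nat.cast_sub hp.one_le, Nat.cast_sub (Nat.one_le_pow 2 p hp.pos)]
  congr 5
  ring
end

section
/- Let n ≥ 2, let F = GF(2^n) be the field with 2^n elements, and let ϑ be the Frobenius automorphism of F (ϑ(x) = x² for all x ∈ F). Let A(n, ϑ) be the group of all 3 × 3 lower unitriangular matrices U(a, b) over F with entry a in position (2,1), b in position (3,1), ϑ(a) in position (3,2), and 1's on the diagonal, for a, b ∈ F, under matrix multiplication. Then the Laplacian spectrum of the non-commuting graph 𝒜_{A(n, ϑ)} is {0^1, (2^{2n} − 2^{n+1})^{(2^n − 1)²}, (2^{2n} − 2^n)^{2^n − 2}}. -/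
/-!
Write `q = 2^n` and `F = GF(q)`. Since `a'a² - aa'² = aa'(a - a')`, the elements `U(a, b)` and
`U(a', b')` commute iff `a = 0`, `a' = 0` or `a = a'`; as `q > 2`, the centre is `{U(0, b)}`.
Hence the non-commuting graph is the complete equipartite graph `K_{q-1}(q)` whose parts are the
cosets `{U(a, b) : b ∈ F}`, `a ≠ 0`. Its Laplacian is `dI + (I - J) ⊗ J` with `d = (q - 2)q`, and
writing `(I - J) ⊗ J = BP` with `PB = q(I - J)` reduces its characteristic polynomial to that
of `q(I - J)` on `q - 1` points, which is a rank-one perturbation of a scalar matrix.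
-/

open Polynomial

open Matrix Kronecker

namespace Matrix

variable {R : Type*} [CommRing R] {α β : Type*} [Fintype α] [DecidableEq α] [Fintype β]
  [DecidableEq β]

theorem charpoly_add_scalar (M : Matrix α α R) (μ : R) :
    (M + scalar α μ).charpoly = M.charpoly.comp (X - C μ) := by
  simpa [sub_eq_add_neg] using charpoly_sub_scalar M (-μ)

theorem charpoly_kronecker_const_one [Nonempty β] (K : Matrix α α R) :
    (K ⊗ₖ of fun _ _ : β => (1 : R)).charpoly =
      X ^ (Fintype.card α * (Fintype.card β - 1)) * ((Fintype.card β : R) • K).charpoly := by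
  let B : Matrix (α × β) α R := of fun p a => K p.1 a
  let P : Matrix α (α × β) R := of fun a q => if a = q.1 then 1 else 0
  have hBP : K ⊗ₖ (of fun _ _ : β => (1 : R)) = B * P := by
    ext p q
    simp [B, P, mul_apply]
  have hPB : P * B = (Fintype.card β : R) • K := by
    ext a b
    simp [B, P, mul_apply, Fintype.sum_prod_type]
  have hcard : Fintype.card α ≤ Fintype.card (α × β) := by
    rw [Fintype.card_prod]
    exact Nat.le_mul_of_pos_right _ Fintype.card_pos
  rw [hBP, charpoly_mul_comm_of_le B P hcard, hPB, Fintype.card_prod, Nat.mul_sub_one]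

theorem charpoly_smul_one_sub_const_one [Nonempty α] (c : R) :
    (c • (1 - of fun _ _ : α => (1 : R))).charpoly =
      (X - C c) ^ (Fintype.card α - 1) * (X - C (c - Fintype.card α * c)) := by
  have h : c • (1 - of fun _ _ : α => (1 : R)) =
      vecMulVec (fun _ => -c) (fun _ => 1) + scalar α c := by
    ext a b
    by_cases hab : a = b <;> simp [hab, vecMulVec_apply]
  have hdot : ((fun _ => -c) ⬝ᵥ fun _ : α => (1 : R)) = -(Fintype.card α * c) := by
    simp [dotProduct]
  obtain ⟨k, hk⟩ := Nat.exists_eq_add_one.mpr (Fintype.card_pos (α := α))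
  rw [h, charpoly_add_scalar, charpoly_vecMulVec, hdot, hk, Nat.add_sub_cancel]
  simp only [smul_eq_C_mul, sub_comp, mul_comp, pow_comp, X_comp, C_comp]
  simp only [map_neg, map_sub, map_mul, map_natCast]
  ring

end Matrix

namespace SimpleGraph

variable {V W : Type*} [Fintype V] [DecidableEq V] [Fintype W] [DecidableEq W]
  {G : SimpleGraph V} {H : SimpleGraph W} [DecidableRel G.Adj] [DecidableRel H.Adj]
  (R : Type*) [CommRing R]

theorem Iso.charpoly_lapMatrix (e : G ≃g H) :
    (H.lapMatrix R).charpoly = (G.lapMatrix R).charpoly := by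
  have h : H.lapMatrix R = (G.lapMatrix R).reindex e e := by
    ext i j
    obtain ⟨i, rfl⟩ := e.surjective i
    obtain ⟨j, rfl⟩ := e.surjective j
    simp [lapMatrix, degMatrix, diagonal_apply, adjMatrix_apply, Iso.map_adj_iff]
  rw [h, charpoly_reindex]

theorem lapMatrix_completeEquipartiteGraph (r t : ℕ) :
    (completeEquipartiteGraph r t).lapMatrix R =
      (1 - of fun _ _ => 1) ⊗ₖ (of fun _ _ : Fin t => (1 : R)) +
        scalar _ (((r - 1) * t : ℕ) : R) := by
  ext p q
  rcases eq_or_ne p q with rfl | hpq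
  · simp [lapMatrix, degMatrix, degree_completeEquipartiteGraph]
  · by_cases h1 : p.1 = q.1 <;> simp [lapMatrix, degMatrix, hpq, h1, one_apply]

theorem charpoly_lapMatrix_completeEquipartiteGraph {r t : ℕ} (hr : r ≠ 0) (ht : t ≠ 0) :
    ((completeEquipartiteGraph r t).lapMatrix R).charpoly =
      X * (X - C (((r - 1) * t : ℕ) : R)) ^ (r * (t - 1)) *
        (X - C ((r * t : ℕ) : R)) ^ (r - 1) := by
  have : NeZero r := ⟨hr⟩
  have : NeZero t := ⟨ht⟩
  have hr1 : 1 ≤ r := NeZero.one_le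
  rw [lapMatrix_completeEquipartiteGraph, charpoly_add_scalar, charpoly_kronecker_const_one,
    charpoly_smul_one_sub_const_one]
  simp only [Fintype.card_fin, mul_comp, pow_comp, sub_comp, X_comp, C_comp]
  have h1 : X - C (((r - 1) * t : ℕ) : R) - C (t : R) = X - C ((r * t : ℕ) : R) := by
    rw [sub_sub, ← C_add]
    congr 2
    push_cast [hr1]
    ring
  have h2 : X - C (((r - 1) * t : ℕ) : R) - C ((t : R) - r * t) = X := by
    rw [sub_sub, ← C_add, sub_eq_self, C_eq_zero]
    push_cast [hr1]
    ring
  rw [h1, h2]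
  ring

end SimpleGraph

section Hanaki

variable {F : Type*} [Field F] {G : Type*} [Group G] {U : F × F ≃ G}

theorem commute_iff_of_hanaki
    (hU : ∀ a b a' b' : F, U (a, b) * U (a', b') = U (a + a', b + b' + a' * a ^ 2))
    (a b a' b' : F) : Commute (U (a, b)) (U (a', b')) ↔ a = 0 ∨ a' = 0 ∨ a = a' := by
  have key : a' * a ^ 2 - a * a' ^ 2 = a * a' * (a - a') := by ring
  rw [Commute, SemiconjBy, hU, hU, U.apply_eq_iff_eq, Prod.mk.injEq, ← or_assoc, ← mul_eq_zero,
    ← sub_eq_zero (a := a), ← mul_eq_zero, ← key, sub_eq_zero]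
  constructor
  · rintro ⟨-, h⟩
    linear_combination h
  · intro h
    exact ⟨add_comm a a', by linear_combination h⟩

theorem mem_center_iff_of_hanaki [Fintype F] (hF : 2 < Fintype.card F)
    (hU : ∀ a b a' b' : F, U (a, b) * U (a', b') = U (a + a', b + b' + a' * a ^ 2))
    (a b : F) : U (a, b) ∈ Subgroup.center G ↔ a = 0 := by
  classical
  rw [Subgroup.mem_center_iff]
  constructor
  · intro h
    obtain ⟨c, -, hc⟩ := Finset.exists_mem_notMem_of_card_lt_card
      ((Finset.card_le_two (a := (0 : F)) (b := a)).trans_lt hF)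
    simp only [Finset.mem_insert, Finset.mem_singleton, not_or] at hc
    have := (commute_iff_of_hanaki hU c 0 a b).mp (h (U (c, 0)))
    tauto
  · rintro rfl g
    obtain ⟨⟨c, d⟩, rfl⟩ := U.surjective g
    exact (commute_iff_of_hanaki hU c d 0 b).mpr (Or.inr (Or.inl rfl))

open SimpleGraph Classical in
noncomputable def nonCommGraphIsoOfHanaki [Fintype F] (hF : 2 < Fintype.card F)
    (hU : ∀ a b a' b' : F, U (a, b) * U (a', b') = U (a + a', b + b' + a' * a ^ 2)) :
    completeEquipartiteGraph (Fintype.card F - 1) (Fintype.card F) ≃g nonCommGraph G where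
  toEquiv :=
    ((Fintype.equivFinOfCardEq (α := {a : F // a ≠ 0})
      (by simp [Fintype.card_subtype_compl])).symm.prodCongr (Fintype.equivFin F).symm).trans <|
      (Equiv.prodSubtypeFstEquivSubtypeProd (p := (· ≠ (0 : F)))).symm.trans <|
        U.subtypeEquiv fun p => (mem_center_iff_of_hanaki hF hU p.1 p.2).not.symm
  map_rel_iff' {p q} := by
    change ¬ Commute _ _ ↔ p.1 ≠ q.1
    have hne (x : {a : F // a ≠ 0}) : (x : F) ≠ 0 := x.2
    simp [commute_iff_of_hanaki hU, Equiv.prodSubtypeFstEquivSubtypeProd, hne, Subtype.coe_ne_coe,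
      (Fintype.equivFinOfCardEq _).symm.injective.ne_iff]

end Hanaki

theorem ncCharpoly_eq_of_iso {G : Type*} [Group G] [Fintype G] {W : Type*} [Fintype W]
    [DecidableEq W] {H : SimpleGraph W} [DecidableRel H.Adj] (e : H ≃g nonCommGraph G) :
    ncCharpoly G = (H.lapMatrix ℝ).charpoly := by
  classical
  unfold ncCharpoly ncLap
  convert e.charpoly_lapMatrix ℝ

/-- Laplacian spectrum of the non-commuting graph of Hanaki's group
`A(n, ϑ)`, realized as any group `G` whose elements are parametrized by pairs
`(a, b) ∈ GF(2^n) × GF(2^n)` via a bijection `U` satisfying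
`U(a, b) * U(a', b') = U(a + a', b + b' + a'·ϑ(a))`, where `ϑ(a) = a²` is the
Frobenius automorphism. -/
theorem laplacian_spectrum_nc_graph_Hanaki_A_n_theta
    (n : ℕ) (hn : 2 ≤ n) (G : Type*) [Group G] [Fintype G]
    (U : GaloisField 2 n × GaloisField 2 n ≃ G)
    (hU : ∀ a b a' b' : GaloisField 2 n,
      U (a, b) * U (a', b') = U (a + a', b + b' + a' * a ^ 2)) :
    ncCharpoly G =
      X *
      (X - C ((2 : ℝ) ^ (2 * n) - 2 ^ (n + 1))) ^ ((2 ^ n - 1) ^ 2) *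
      (X - C ((2 : ℝ) ^ (2 * n) - 2 ^ n)) ^ (2 ^ n - 2) := by
  let : Fintype (GaloisField 2 n) := Fintype.ofFinite _
  have hq : Fintype.card (GaloisField 2 n) = 2 ^ n := by
    rw [← Nat.card_eq_fintype_card]
    exact GaloisField.card 2 n (by omega)
  have h4 : 4 ≤ 2 ^ n := Nat.pow_le_pow_right two_pos hn
  rw [ncCharpoly_eq_of_iso (nonCommGraphIsoOfHanaki (by omega) hU),
    SimpleGraph.charpoly_lapMatrix_completeEquipartiteGraph ℝ (by omega) (by omega), hq]
  have h1 : (((2 ^ n - 1 - 1) * 2 ^ n : ℕ) : ℝ) = 2 ^ (2 * n) - 2 ^ (n + 1) := by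
    rw [Nat.sub_sub, Nat.cast_mul, Nat.cast_sub (by omega)]
    push_cast
    ring
  have h2 : (((2 ^ n - 1) * 2 ^ n : ℕ) : ℝ) = 2 ^ (2 * n) - 2 ^ n := by
    rw [Nat.cast_mul, Nat.cast_sub (by omega)]
    push_cast
    ring
  rw [h1, h2, ← sq, Nat.sub_sub]
end

section
/- If G is a finite 4-centralizer group, i.e. the set {C_G(x) : x ∈ G} of element centralizers of G has exactly 4 members, then the non-commuting graph 𝒜_G is L-integral. -/
/-!
Three proper centralizers cover a `4`-centralizer group `G`, and no group is a union of two proper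
subgroups. Hence each proper centralizer contains an element lying in no other one, and this forces
commuting non-central elements to have the same centralizer: commuting is an equivalence relation on
`G \ Z(G)`, i.e. the non-commuting graph is complete multipartite.

For the Laplacian `L` of a complete multipartite graph on `N` vertices, sum an eigen-equation
`L v = μ v` over all vertices and over each part: either `μ = 0`, or `μ = N`, or `v` sums to zero on
every part, and then the eigen-equation at a vertex `x` with `v x ≠ 0` reads `μ = N - |part of x|`.
-/

open Polynomial

namespace Subgroup

variable {G : Type*} [Group G]

theorem centralizer_singleton_ne_top_iff {x : G} : centralizer {x} ≠ ⊤ ↔ x ∉ center G := by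
  rw [Ne, centralizer_eq_top_iff_subset, Set.singleton_subset_iff, SetLike.mem_coe]

theorem exists_mem_notMem_notMem_of_forall_mem_or {A B C : Subgroup G}
    (hcover : ∀ g, g ∈ A ∨ g ∈ B ∨ g ∈ C) (hB : B ≠ ⊤) (hC : C ≠ ⊤) :
    ∃ g ∈ A, g ∉ B ∧ g ∉ C := by
  by_contra! hA
  have hBC : ((⊤ : Subgroup G) : Set G) ⊆ B ∪ C := fun g _ ↦ by
    rcases hcover g with hg | hg | hg
    · by_cases hgB : g ∈ B
      exacts [Or.inl hgB, Or.inr (hA g hg hgB)]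
    exacts [Or.inl hg, Or.inr hg]
  rcases SubgroupClass.subset_union.mp hBC with h | h
  exacts [hB (top_le_iff.mp h), hC (top_le_iff.mp h)]

/-- The three proper centralizers cover `G`, and an element lying in only one of them has that one
as its centralizer. -/
theorem centralizer_eq_of_commute_of_ncard_eq_four
    (hG : {H : Subgroup G | ∃ x : G, H = centralizer {x}}.ncard = 4)
    {x y : G} (hx : x ∉ center G) (hy : y ∉ center G) (hxy : Commute x y) :
    centralizer {x} = centralizer {y} := by
  set S := {H : Subgroup G | ∃ x : G, H = centralizer {x}}
  have hself : ∀ g : G, g ∈ centralizer {g} := fun g ↦ mem_centralizer_singleton_iff.mpr rfl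
  by_contra hne
  have htop : (⊤ : Subgroup G) ∈ S := ⟨1, (centralizer_eq_top_iff_subset.mpr (by simp)).symm⟩
  have hCx : centralizer {x} ∈ S \ {⊤} := ⟨⟨x, rfl⟩, centralizer_singleton_ne_top_iff.mpr hx⟩
  have hCy : centralizer {y} ∈ (S \ {⊤}) \ {centralizer {x}} :=
    ⟨⟨⟨y, rfl⟩, centralizer_singleton_ne_top_iff.mpr hy⟩, Ne.symm hne⟩
  obtain ⟨K, hK⟩ : ∃ K, ((S \ {⊤}) \ {centralizer {x}}) \ {centralizer {y}} = {K} := by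
    rw [← Set.ncard_eq_one, Set.ncard_sdiff_singleton_of_mem hCy,
      Set.ncard_sdiff_singleton_of_mem hCx, Set.ncard_sdiff_singleton_of_mem htop, hG]
  have hKmem : K ∈ ((S \ {⊤}) \ {centralizer {x}}) \ {centralizer {y}} := hK ▸ rfl
  simp only [Set.mem_sdiff, Set.mem_singleton_iff] at hKmem
  obtain ⟨⟨⟨-, hKtop⟩, hKx⟩, hKy⟩ := hKmem
  have hthree : ∀ z ∉ center G,
      centralizer {z} = centralizer {x} ∨ centralizer {z} = centralizer {y} ∨
        centralizer {z} = K := by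
    intro z hz
    by_contra! hz'
    have hmem : centralizer {z} ∈ ((S \ {⊤}) \ {centralizer {x}}) \ {centralizer {y}} :=
      ⟨⟨⟨⟨z, rfl⟩, centralizer_singleton_ne_top_iff.mpr hz⟩, hz'.1⟩, hz'.2.1⟩
    rw [hK] at hmem
    exact hz'.2.2 hmem
  have hcover : ∀ g, g ∈ centralizer {y} ∨ g ∈ centralizer {x} ∨ g ∈ K := by
    intro g
    by_cases hg : g ∈ center G
    · exact Or.inl (center_le_centralizer _ hg)
    · have hgg := hself g
      rcases hthree g hg with h | h | h <;> rw [h] at hgg <;> simp [hgg]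
  obtain ⟨g, hgy, hgx, hgK⟩ := exists_mem_notMem_notMem_of_forall_mem_or hcover
    (centralizer_singleton_ne_top_iff.mpr hx) hKtop
  have hgc : g ∉ center G := fun hg ↦ hgx (center_le_centralizer _ hg)
  have hgg := hself g
  have hCg : centralizer {g} = centralizer {y} := by
    rcases hthree g hgc with h | h | h
    · exact absurd (h ▸ hgg) hgx
    · exact h
    · exact absurd (h ▸ hgg) hgK
  have hxg : x ∈ centralizer {g} := hCg ▸ mem_centralizer_singleton_iff.mpr hxy
  exact hgx (mem_centralizer_singleton_iff.mpr (mem_centralizer_singleton_iff.mp hxg).symm)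

end Subgroup

open Finset Matrix

namespace SimpleGraph

variable {V : Type*} [Fintype V] (G : SimpleGraph V) [DecidableRel G.Adj]

theorem sum_lapMatrix_mulVec [DecidableEq V] {R : Type*} [CommRing R] (v : V → R) :
    ∑ x, (G.lapMatrix R *ᵥ v) x = 0 := by
  have h1 : (1 : V → R) ᵥ* G.lapMatrix R = 0 := by
    rw [← Matrix.mulVec_transpose, G.isSymm_lapMatrix R, ← G.lapMatrix_mulVec_const_eq_zero]
    rfl
  simpa [dotProduct, h1] using Matrix.dotProduct_mulVec (1 : V → R) (G.lapMatrix R) v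

theorem lapMatrix_mulVec_apply_eq_sum_not_adj [DecidableEq V] {R : Type*} [Ring R] (v : V → R)
    (x : V) :
    (G.lapMatrix R *ᵥ v) x =
      (Fintype.card V - #{y | ¬G.Adj x y} : R) * v x - ∑ y, v y + ∑ y with ¬G.Adj x y, v y := by
  have hcard : (#{y | G.Adj x y} + #{y | ¬G.Adj x y} : R) = Fintype.card V := by
    rw [← Nat.cast_add, card_filter_add_card_filter_not, card_univ]
  have hsum := sum_filter_add_sum_filter_not univ (fun y ↦ G.Adj x y) v
  rw [lapMatrix_mulVec_apply, ← card_neighborFinset_eq_degree, neighborFinset_eq_filter,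
    ← hcard, ← hsum]
  noncomm_ring

variable {G}

theorem IsCompleteMultipartite.filter_not_adj_eq (h : G.IsCompleteMultipartite) {x y : V}
    (hxy : ¬G.Adj x y) : univ.filter (¬G.Adj y ·) = univ.filter (¬G.Adj x ·) := by
  ext z
  simp only [mem_filter, mem_univ, true_and]
  exact ⟨h.trans x y z hxy, h.trans y x z (by rwa [adj_comm])⟩

theorem IsCompleteMultipartite.eq_zero_or_eq_card_of_mem_spectrum_lapMatrix [DecidableEq V]
    {K : Type*} [Field K] (h : G.IsCompleteMultipartite) {μ : K}
    (hμ : μ ∈ spectrum K (G.lapMatrix K)) :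
    μ = 0 ∨ μ = Fintype.card V ∨ ∃ x, μ = Fintype.card V - #{y | ¬G.Adj x y} := by
  rw [← Matrix.spectrum_toLin', ← Module.End.hasEigenvalue_iff_mem_spectrum] at hμ
  obtain ⟨v, hv⟩ := hμ.exists_hasEigenvector
  have hLv : G.lapMatrix K *ᵥ v = μ • v := by
    rw [← Matrix.toLin'_apply]
    exact hv.apply_eq_smul
  set N : K := (Fintype.card V : K)
  set m : V → ℕ := fun x ↦ #{y | ¬G.Adj x y}
  set S := ∑ y, v y
  set P : V → K := fun x ↦ ∑ y with ¬G.Adj x y, v y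
  have heig : ∀ x, μ * v x = (N - m x) * v x - S + P x := fun x ↦ by
    rw [← G.lapMatrix_mulVec_apply_eq_sum_not_adj, hLv, Pi.smul_apply, smul_eq_mul]
  have hS : μ * S = 0 := by
    rw [mul_sum, ← G.sum_lapMatrix_mulVec v, hLv]
    simp
  have hP : ∀ x, μ * P x = N * P x - m x * S := fun x ↦ by
    have hpart : ∀ y ∈ ({y | ¬G.Adj x y} : Finset V), m y = m x ∧ P y = P x := fun y hy ↦ by
      have := h.filter_not_adj_eq (mem_filter.mp hy).2
      exact ⟨congrArg card this, congrArg (∑ z ∈ ·, v z) this⟩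
    calc μ * P x = ∑ y with ¬G.Adj x y, ((N - m x) * v y - S + P x) := by
          rw [mul_sum]
          refine sum_congr rfl fun y hy ↦ ?_
          rw [heig, (hpart y hy).1, (hpart y hy).2]
      _ = N * P x - m x * S := by
          rw [sum_add_distrib, sum_sub_distrib, ← mul_sum, sum_const, sum_const, nsmul_eq_mul,
            nsmul_eq_mul]
          ring
  by_cases hμ0 : μ = 0
  · exact Or.inl hμ0
  have hS0 : S = 0 := (mul_eq_zero.mp hS).resolve_left hμ0
  by_cases hμN : μ = N
  · exact Or.inr (Or.inl hμN)
  have hP0 : ∀ x, P x = 0 := fun x ↦ by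
    have : (μ - N) * P x = 0 := by linear_combination hP x - m x * hS0
    exact (mul_eq_zero.mp this).resolve_left (sub_ne_zero.mpr hμN)
  obtain ⟨x, hx⟩ := Function.ne_iff.mp hv.2
  refine Or.inr (Or.inr ⟨x, mul_right_cancel₀ hx ?_⟩)
  simpa [hS0, hP0] using heig x

end SimpleGraph

theorem isCompleteMultipartite_nonCommGraph {G : Type*} [Group G]
    (hG : {H : Subgroup G | ∃ x : G, H = Subgroup.centralizer {x}}.ncard = 4) :
    (nonCommGraph G).IsCompleteMultipartite where
  trans x y z hxy hyz := by
    have hxy' : Subgroup.centralizer {(x : G)} = Subgroup.centralizer {(y : G)} :=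
      Subgroup.centralizer_eq_of_commute_of_ncard_eq_four hG x.2 y.2 (not_not.mp hxy)
    have hyz' : Subgroup.centralizer {(y : G)} = Subgroup.centralizer {(z : G)} :=
      Subgroup.centralizer_eq_of_commute_of_ncard_eq_four hG y.2 z.2 (not_not.mp hyz)
    have hzx : (z : G) ∈ Subgroup.centralizer {(x : G)} :=
      (hxy'.trans hyz') ▸ Subgroup.mem_centralizer_singleton_iff.mpr rfl
    exact not_not.mpr (Subgroup.mem_centralizer_singleton_iff.mp hzx).symm

/-- The non-commuting graph of a finite `4`-centralizer group is
L-integral. -/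
theorem nc_graph_LIntegral_of_four_centralizer
    (G : Type*) [Group G] [Fintype G]
    (h : Set.ncard {H : Subgroup G | ∃ x : G, H = Subgroup.centralizer {x}} = 4) :
    ncLIntegral G := by
  -- the instances `ncLap` is built with
  let := Classical.decEq G
  let : DecidablePred (· ∉ Subgroup.center G) := fun _ ↦ Classical.dec _
  let : DecidableRel (nonCommGraph G).Adj := fun _ _ ↦ Classical.dec _
  intro μ hμ
  rcases (isCompleteMultipartite_nonCommGraph h).eq_zero_or_eq_card_of_mem_spectrum_lapMatrix hμ
    with rfl | rfl | ⟨x, rfl⟩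
  · exact ⟨0, by simp⟩
  · exact ⟨_, (Int.cast_natCast _).symm⟩
  · exact ⟨Fintype.card _ - #{y | ¬(nonCommGraph G).Adj x y}, by push_cast; rfl⟩
end

section
/- If G is a finite 5-centralizer group, i.e. the set {C_G(x) : x ∈ G} of element centralizers of G has exactly 5 members, then the non-commuting graph 𝒜_G is L-integral. -/
open Polynomial

/-!
If `a`, `c` do not commute but both commute with a non-central `b`, then `G`, `C(a)`, `C(b)`,
`C(c)` and `C(ac)` are five distinct centralizers all containing `b`; in a group with at most five
centralizers these are all of them, forcing `b` to be central. So commuting is transitive on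
non-central elements, i.e. the non-commuting graph is complete multipartite. For a complete
multipartite graph, an eigenvector of the Laplacian either separates two vertices of one part,
which have the same neighbourhood, and then the eigenvalue is their degree; or it is constant on
parts, and then `L v = n v - (∑ᵢ vᵢ) 1`, leaving only the eigenvalues `0` and `n`.
-/

open Matrix

namespace Subgroup

variable {G : Type*} [Group G]

lemma centralizer_singleton_ne_top {x : G} (hx : x ∉ center G) : centralizer {x} ≠ ⊤ :=
  fun h => hx (Set.singleton_subset_iff.mp (centralizer_eq_top_iff_subset.mp h))

lemma mem_center_of_ncard_centralizers_le [Finite G] {F : Finset (Subgroup G)} {b : G}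
    (hF : ↑F ⊆ Set.range fun x : G => centralizer {x})
    (hcard : (Set.range fun x : G => centralizer {x}).ncard ≤ F.card)
    (hb : ∀ H ∈ F, b ∈ H) : b ∈ center G := by
  have hF_eq : ↑F = Set.range fun x : G => centralizer {x} :=
    Set.eq_of_subset_of_ncard_le hF (by rwa [Set.ncard_coe_finset]) (Set.finite_range _)
  refine mem_center_iff.mpr fun g => (mem_centralizer_singleton_iff.mp (hb _ ?_)).symm
  exact Finset.mem_coe.mp (hF_eq ▸ Set.mem_range_self g)

lemma card_centralizers_of_not_commute [DecidableEq (Subgroup G)] {a b c : G}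
    (hab : Commute a b) (hbc : Commute b c) (hb : b ∉ center G) (hac : ¬ Commute a c) :
    ({⊤, centralizer {a}, centralizer {b}, centralizer {c}, centralizer {a * c}} :
      Finset (Subgroup G)).card = 5 := by
  have hca : ¬ Commute c a := fun h => hac h.symm
  have hac_mul : ¬ Commute a (a * c) :=
    fun h => hac ((IsLeftRegular.all a).commute_mul_left_iff.mp h.symm)
  have hc_mul : ¬ Commute c (a * c) :=
    fun h => hac ((IsRightRegular.all c).commute_mul_right_iff.mp h.symm).symm
  have mem : ∀ {x y : G}, Commute x y → x ∈ centralizer {y} :=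
    mem_centralizer_singleton_iff.mpr
  have not_mem : ∀ {x y : G}, ¬ Commute x y → x ∉ centralizer {y} :=
    fun hxy hx => hxy (mem_centralizer_singleton_iff.mp hx)
  have ne_top : ∀ {x y : G}, ¬ Commute x y → centralizer {y} ≠ ⊤ :=
    fun {x _} hxy => centralizer_singleton_ne_top fun hy => hxy (mem_center_iff.mp hy x)
  have hab_ne := ne_of_mem_of_not_mem' (mem hbc.symm) (not_mem hca)
  have hac_ne := ne_of_mem_of_not_mem' (mem (Commute.refl a)) (not_mem hac)
  have had_ne := ne_of_mem_of_not_mem' (mem (Commute.refl a)) (not_mem hac_mul)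
  have hbc_ne := ne_of_mem_of_not_mem' (mem hab) (not_mem hac)
  have hbd_ne := ne_of_mem_of_not_mem' (mem hab) (not_mem hac_mul)
  have hcd_ne := ne_of_mem_of_not_mem' (mem (Commute.refl c)) (not_mem hc_mul)
  simp [Finset.card_insert_of_notMem, (ne_top hca).symm, (ne_top hac).symm,
    (ne_top hac_mul).symm, (centralizer_singleton_ne_top hb).symm, hab_ne.symm, hac_ne,
    had_ne, hbc_ne, hbd_ne, hcd_ne]

theorem commute_of_ncard_centralizers_le_five [Finite G]
    (h : (Set.range fun x : G => centralizer {x}).ncard ≤ 5) {a b c : G}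
    (hab : Commute a b) (hbc : Commute b c) (hb : b ∉ center G) : Commute a c := by
  classical
  by_contra hac
  refine hb (mem_center_of_ncard_centralizers_le ?_
    (h.trans (card_centralizers_of_not_commute hab hbc hb hac).ge) ?_)
  · intro H hH
    simp only [Finset.coe_insert, Finset.coe_singleton, Set.mem_insert_iff,
      Set.mem_singleton_iff] at hH
    rcases hH with rfl | rfl | rfl | rfl | rfl
    · exact ⟨1, centralizer_eq_top_iff_subset.mpr (by simp)⟩
    all_goals exact Set.mem_range_self _
  · simp only [Finset.mem_insert, Finset.mem_singleton, forall_eq_or_imp, forall_eq,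
      mem_centralizer_singleton_iff]
    exact ⟨mem_top b, hab.symm, trivial, hbc, hab.symm.mul_right hbc⟩

end Subgroup

namespace SimpleGraph

variable {V R : Type*} [Fintype V] {G : SimpleGraph V} [DecidableRel G.Adj]

lemma IsCompleteMultipartite.neighborFinset_eq (hG : G.IsCompleteMultipartite) {x y : V}
    (hxy : ¬ G.Adj x y) : G.neighborFinset x = G.neighborFinset y := by
  ext z
  simp only [mem_neighborFinset]
  exact ⟨not_imp_not.mp (hG.trans x y z hxy),
    not_imp_not.mp (hG.trans y x z fun h => hxy h.symm)⟩

variable [DecidableEq V]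

lemma lapMatrix_mulVec_apply_eq_sum [NonAssocRing R] (v : V → R) (x : V) :
    (G.lapMatrix R *ᵥ v) x = ∑ y ∈ G.neighborFinset x, (v x - v y) := by
  rw [lapMatrix_mulVec_apply, Finset.sum_sub_distrib, Finset.sum_const,
    card_neighborFinset_eq_degree, nsmul_eq_mul]

lemma lapMatrix_mulVec_apply_of_forall_not_adj [NonAssocRing R] {v : V → R}
    (hv : ∀ x y, ¬ G.Adj x y → v x = v y) (x : V) :
    (G.lapMatrix R *ᵥ v) x = Fintype.card V * v x - ∑ y, v y := by
  rw [lapMatrix_mulVec_apply_eq_sum, Finset.sum_subset (Finset.subset_univ _)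
    fun y _ hy => sub_eq_zero.mpr (hv x y (by simpa using hy)), Finset.sum_sub_distrib,
    Finset.sum_const, Finset.card_univ, nsmul_eq_mul]

variable [CommRing R] [IsDomain R]

lemma IsCompleteMultipartite.eq_degree_of_lapMatrix_mulVec_eq_smul
    (hG : G.IsCompleteMultipartite) {μ : R} {v : V → R} (hv : G.lapMatrix R *ᵥ v = μ • v)
    {x y : V} (hxy : ¬ G.Adj x y) (hne : v x ≠ v y) : μ = G.degree x := by
  have hx := congrFun hv x
  have hy := congrFun hv y
  rw [lapMatrix_mulVec_apply, Pi.smul_apply, smul_eq_mul] at hx hy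
  have hdeg : G.degree y = G.degree x := by
    rw [← card_neighborFinset_eq_degree, ← card_neighborFinset_eq_degree,
      hG.neighborFinset_eq hxy]
  rw [← hG.neighborFinset_eq hxy, hdeg] at hy
  have : (μ - G.degree x) * (v x - v y) = 0 := by linear_combination hy - hx
  exact sub_eq_zero.mp ((mul_eq_zero.mp this).resolve_right (sub_ne_zero.mpr hne))

theorem IsCompleteMultipartite.eigenvalue_lapMatrix (hG : G.IsCompleteMultipartite) {μ : R}
    {v : V → R} (hv0 : v ≠ 0) (hv : G.lapMatrix R *ᵥ v = μ • v) :
    μ = 0 ∨ μ = Fintype.card V ∨ ∃ x, μ = G.degree x := by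
  by_cases hsplit : ∃ x y, ¬ G.Adj x y ∧ v x ≠ v y
  · obtain ⟨x, y, hxy, hne⟩ := hsplit
    exact Or.inr (Or.inr ⟨x, hG.eq_degree_of_lapMatrix_mulVec_eq_smul hv hxy hne⟩)
  push Not at hsplit
  have heq : ∀ x, μ * v x = Fintype.card V * v x - ∑ y, v y := fun x => by
    rw [← lapMatrix_mulVec_apply_of_forall_not_adj hsplit, hv, Pi.smul_apply, smul_eq_mul]
  obtain ⟨x₀, hx₀⟩ := Function.ne_iff.mp hv0
  rcases eq_or_ne μ (Fintype.card V) with hμ | hμ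
  · exact Or.inr (Or.inl hμ)
  left
  have hconst : ∀ x, v x = v x₀ := fun x => by
    have : (μ - Fintype.card V) * (v x - v x₀) = 0 := by linear_combination heq x - heq x₀
    exact sub_eq_zero.mp ((mul_eq_zero.mp this).resolve_left (sub_ne_zero.mpr hμ))
  have hsum : ∑ y, v y = Fintype.card V * v x₀ := by
    rw [Finset.sum_congr rfl fun y _ => hconst y, Finset.sum_const, Finset.card_univ, nsmul_eq_mul]
  have : μ * v x₀ = 0 := by rw [heq, hsum, sub_self]
  exact (mul_eq_zero.mp this).resolve_right hx₀

theorem IsCompleteMultipartite.mem_spectrum_lapMatrix {K : Type*} [Field K]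
    (hG : G.IsCompleteMultipartite) {μ : K} (hμ : μ ∈ spectrum K (G.lapMatrix K)) :
    μ = 0 ∨ μ = Fintype.card V ∨ ∃ x, μ = G.degree x := by
  rw [← Matrix.spectrum_toLin', ← Module.End.hasEigenvalue_iff_mem_spectrum] at hμ
  obtain ⟨v, hv⟩ := hμ.exists_hasEigenvector
  exact hG.eigenvalue_lapMatrix hv.2 (by rw [← Matrix.toLin'_apply, hv.apply_eq_smul])

end SimpleGraph

theorem isCompleteMultipartite_nonCommGraph_of_ncard_centralizers_le_five {G : Type*} [Group G]
    [Finite G] (h : (Set.range fun x : G => Subgroup.centralizer {x}).ncard ≤ 5) :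
    (nonCommGraph G).IsCompleteMultipartite where
  trans _ y _ hxy hyz := not_not_intro <|
    Subgroup.commute_of_ncard_centralizers_le_five h (not_not.mp hxy) (not_not.mp hyz) y.2

theorem ncLIntegral_of_isCompleteMultipartite {G : Type*} [Group G] [Fintype G]
    (hG : (nonCommGraph G).IsCompleteMultipartite) : ncLIntegral G := by
  -- the decidability instances with which `ncLIntegral` and `ncLap` are built
  let := Classical.decEq G
  let : DecidablePred (· ∉ Subgroup.center G) := fun _ => Classical.dec _
  let : DecidableRel (nonCommGraph G).Adj := fun _ _ => Classical.dec _
  intro μ hμ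
  rcases hG.mem_spectrum_lapMatrix hμ with rfl | rfl | ⟨x, rfl⟩
  exacts [⟨0, Int.cast_zero.symm⟩, ⟨_, (Int.cast_natCast _).symm⟩,
    ⟨_, (Int.cast_natCast _).symm⟩]

/-- The non-commuting graph of a finite `5`-centralizer group is
L-integral. -/
theorem nc_graph_LIntegral_of_five_centralizer
    (G : Type*) [Group G] [Fintype G]
    (h : Set.ncard {H : Subgroup G | ∃ x : G, H = Subgroup.centralizer {x}} = 5) :
    ncLIntegral G := by
  have hrange : {H : Subgroup G | ∃ x : G, H = Subgroup.centralizer {x}} =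
      Set.range fun x : G => Subgroup.centralizer {x} :=
    Set.ext fun _ => exists_congr fun _ => eq_comm
  exact ncLIntegral_of_isCompleteMultipartite
    (isCompleteMultipartite_nonCommGraph_of_ncard_centralizers_le_five (hrange ▸ h).le)
end
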